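/- arXiv:1903.06617 — 4 statements merged into one kernel-verified Lean document; each statement's English description precedes it below -/
import Mathlib

section
/- Let X be a set of n points in ℝ^d, R a range family, 0 < ε < 1, ρ > 0, and i ≥ 1 an integer with 1/2^{i−1} > ρ. Fix h ∈ R with |X∩h| ≤ ρn, and let R' ⊆ R be a subfamily in which every range h' satisfies |X∩h'| ≤ n(1+ε)/2^{i−1}. Then |X ∩ DIS(R')|/n ≤ θ_{U(X)}^h(2ρ) · (ρ + (1+ε)/2^{i−1}). -/
open Set

/-- The disagreement region of a family of ranges. -/
def DIS {α : Type*} (R' : Set (Set α)) : Set α :=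
  {x | ∃ h₁ ∈ R', ∃ h₂ ∈ R', x ∈ h₁ ∧ x ∉ h₂}

/-- The `r`-ball around `h` under the uniform distribution on the finite set `X`:
all ranges `h' ∈ R` with `|X ∩ DIS({h,h'})| ≤ r·|X|`. -/
noncomputable def ballU {α : Type*} (X : Set α) (R : Set (Set α)) (h : Set α) (r : ℝ) :
    Set (Set α) :=
  {h' | h' ∈ R ∧ ((X ∩ DIS {h, h'}).ncard : ℝ) ≤ r * (X.ncard : ℝ)}

/-- The disagreement coefficient `θ_{U(X)}^h(σ)` of a range `h`
with respect to the uniform distribution on `X`. -/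
noncomputable def thetaU {α : Type*} (X : Set α) (R : Set (Set α)) (h : Set α) (σ : ℝ) : ℝ :=
  max 1 (sSup {v : ℝ | ∃ r : ℝ, σ < r ∧
    v = ((X ∩ DIS (ballU X R h r)).ncard : ℝ) / (r * (X.ncard : ℝ))})

/-!
Since `DIS {h, h'} ⊆ h ∪ h'`, every range of `R'` lies in the ball `B(h, r)` with
`r = ρ + (1 + ε) / 2 ^ (i - 1)`. Hence `DIS R' ⊆ DIS (B(h, r))`, and as `2ρ < r` the definition
of the disagreement coefficient bounds `Pr[DIS (B(h, r))]` by `θ(2ρ) · r`.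
-/

variable {α : Type*}

theorem DIS_mono {R₁ R₂ : Set (Set α)} (hR : R₁ ⊆ R₂) : DIS R₁ ⊆ DIS R₂ := by
  rintro x ⟨h₁, hh₁, h₂, hh₂, hx₁, hx₂⟩
  exact ⟨h₁, hR hh₁, h₂, hR hh₂, hx₁, hx₂⟩

theorem DIS_pair_subset (h h' : Set α) : DIS {h, h'} ⊆ h ∪ h' := by
  rintro x ⟨h₁, rfl | rfl, -, -, hx, -⟩
  · exact Or.inl hx
  · exact Or.inr hx

theorem ncard_inter_DIS_pair_le {X : Set α} (hX : X.Finite) (h h' : Set α) :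
    (X ∩ DIS {h, h'}).ncard ≤ (X ∩ h).ncard + (X ∩ h').ncard :=
  calc (X ∩ DIS {h, h'}).ncard ≤ ((X ∩ h) ∪ (X ∩ h')).ncard := by
        rw [← inter_union_distrib_left]
        exact ncard_le_ncard (inter_subset_inter_right X (DIS_pair_subset h h'))
          (hX.subset inter_subset_left)
    _ ≤ (X ∩ h).ncard + (X ∩ h').ncard := ncard_union_le _ _

theorem subset_ballU {X : Set α} (hX : X.Finite) {R R' : Set (Set α)} (hR : R' ⊆ R)
    {h : Set α} {r : ℝ}
    (hr : ∀ h' ∈ R', ((X ∩ h).ncard : ℝ) + (X ∩ h').ncard ≤ r * X.ncard) :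
    R' ⊆ ballU X R h r := fun h' hh' =>
  ⟨hR hh', le_trans (by exact_mod_cast ncard_inter_DIS_pair_le hX h h') (hr h' hh')⟩

theorem ncard_inter_div_le_one_div {X : Set α} (hX : X.Finite) (A : Set α) {r : ℝ}
    (hr : 0 < r) : ((X ∩ A).ncard : ℝ) / (r * X.ncard) ≤ 1 / r := by
  rcases X.ncard.eq_zero_or_pos with hn | hn
  · rw [hn, Nat.cast_zero, mul_zero, div_zero]
    positivity
  calc ((X ∩ A).ncard : ℝ) / (r * X.ncard) ≤ X.ncard / (r * X.ncard) := by
        gcongr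
        exact inter_subset_left
    _ = 1 / r := by field_simp

theorem one_le_thetaU (X : Set α) (R : Set (Set α)) (h : Set α) (σ : ℝ) :
    1 ≤ thetaU X R h σ :=
  le_max_left _ _

theorem ballU_ratio_le_thetaU {X : Set α} (hX : X.Finite) (R : Set (Set α)) (h : Set α)
    {σ r : ℝ} (hσ : 0 < σ) (hσr : σ < r) :
    ((X ∩ DIS (ballU X R h r)).ncard : ℝ) / (r * X.ncard) ≤ thetaU X R h σ := by
  have hbdd : BddAbove {v : ℝ | ∃ r : ℝ, σ < r ∧
      v = ((X ∩ DIS (ballU X R h r)).ncard : ℝ) / (r * (X.ncard : ℝ))} := by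
    refine ⟨1 / σ, ?_⟩
    rintro _ ⟨r', hr', rfl⟩
    exact (ncard_inter_div_le_one_div hX _ (hσ.trans hr')).trans
      (one_div_le_one_div_of_le hσ hr'.le)
  exact (le_csSup hbdd ⟨r, hσr, rfl⟩).trans (le_max_right _ _)

theorem ncard_inter_DIS_div_le_thetaU_mul {X : Set α} (hX : X.Finite) {R R' : Set (Set α)}
    {h : Set α} {σ r : ℝ} (hσ : 0 < σ) (hσr : σ < r) (hR' : R' ⊆ ballU X R h r) :
    ((X ∩ DIS R').ncard : ℝ) / X.ncard ≤ thetaU X R h σ * r := by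
  have hr : 0 < r := hσ.trans hσr
  calc ((X ∩ DIS R').ncard : ℝ) / X.ncard
      ≤ ((X ∩ DIS (ballU X R h r)).ncard : ℝ) / X.ncard := by
        gcongr
        · exact hX.subset inter_subset_left
        · exact DIS_mono hR'
    _ = ((X ∩ DIS (ballU X R h r)).ncard : ℝ) / (r * X.ncard) * r := by
        rw [div_mul_eq_mul_div, mul_comm _ r, mul_div_mul_left _ _ hr.ne']
    _ ≤ thetaU X R h σ * r := by
        gcongr
        exact ballU_ratio_le_thetaU hX R h hσ hσr

theorem stmt3_general (d : ℕ) (X : Set (Fin d → ℝ))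
    (R R' : Set (Set (Fin d → ℝ))) (hsub : R' ⊆ R)
    (ε ρ : ℝ) (hε0 : 0 < ε) (hρ0 : 0 < ρ)
    (i : ℕ) (hiρ : ρ < 1 / (2 : ℝ) ^ (i - 1))
    (h : Set (Fin d → ℝ))
    (hhρ : ((X ∩ h).ncard : ℝ) ≤ ρ * (X.ncard : ℝ))
    (hsmall : ∀ h' ∈ R',
      ((X ∩ h').ncard : ℝ) ≤ (X.ncard : ℝ) * (1 + ε) / (2 : ℝ) ^ (i - 1)) :
    ((X ∩ DIS R').ncard : ℝ) / (X.ncard : ℝ) ≤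
      thetaU X R h (2 * ρ) * (ρ + (1 + ε) / (2 : ℝ) ^ (i - 1)) := by
  rcases X.ncard.eq_zero_or_pos with hn | hn
  -- `ncard` is `0` on infinite sets, so this case also covers infinite `X`.
  · rw [hn, Nat.cast_zero, div_zero]
    exact mul_nonneg (zero_le_one.trans (one_le_thetaU X R h _)) (by positivity)
  have hX : X.Finite := finite_of_ncard_pos hn
  have h2ρ : 2 * ρ < ρ + (1 + ε) / (2 : ℝ) ^ (i - 1) := by
    have : 1 / (2 : ℝ) ^ (i - 1) ≤ (1 + ε) / 2 ^ (i - 1) := by gcongr; linarith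
    linarith
  refine ncard_inter_DIS_div_le_thetaU_mul hX (by positivity) h2ρ
    (subset_ballU hX hsub fun h' hh' => ?_)
  calc ((X ∩ h).ncard : ℝ) + (X ∩ h').ncard
      ≤ ρ * X.ncard + X.ncard * (1 + ε) / (2 : ℝ) ^ (i - 1) := add_le_add hhρ (hsmall h' hh')
    _ = (ρ + (1 + ε) / (2 : ℝ) ^ (i - 1)) * X.ncard := by ring

theorem stmt3 (d : ℕ) (X : Set (Fin d → ℝ)) (hX : X.Finite)
    (R R' : Set (Set (Fin d → ℝ))) (hsub : R' ⊆ R)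
    (ε ρ : ℝ) (hε0 : 0 < ε) (hε1 : ε < 1) (hρ0 : 0 < ρ)
    (i : ℕ) (hi : 1 ≤ i) (hiρ : ρ < 1 / (2 : ℝ) ^ (i - 1))
    (h : Set (Fin d → ℝ)) (hh : h ∈ R)
    (hhρ : ((X ∩ h).ncard : ℝ) ≤ ρ * (X.ncard : ℝ))
    (hsmall : ∀ h' ∈ R',
      ((X ∩ h').ncard : ℝ) ≤ (X.ncard : ℝ) * (1 + ε) / (2 : ℝ) ^ (i - 1)) :
    ((X ∩ DIS R').ncard : ℝ) / (X.ncard : ℝ) ≤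
      thetaU X R h (2 * ρ) * (ρ + (1 + ε) / (2 : ℝ) ^ (i - 1)) :=
  stmt3_general d X R R' hsub ε ρ hε0 hρ0 i hiρ h hhρ hsmall
end

section
/- Let d = O(1) be constant, let U be the uniform distribution on the unit box [0,1]^d, and let R be the family of all halfspaces in ℝ^d. For any halfspace h ∈ R disjoint from [0,1]^d, the disagreement coefficient satisfies θ_U^h(σ) = O(log^{d−1}(1/σ)) for all σ > 0 (with the constant depending only on d). -/
open Set MeasureTheory
open scoped ENNReal

/-- A halfspace in `ℝ^d`: `{x | a·x ≥ b}` with `a ≠ 0`. -/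
def IsHalfspace {d : ℕ} (h : Set (Fin d → ℝ)) : Prop :=
  ∃ a : Fin d → ℝ, a ≠ 0 ∧ ∃ b : ℝ, h = {x | b ≤ ∑ i, a i * x i}

/-- `Pr_D[A]`. -/
noncomputable def prD {α : Type*} [MeasurableSpace α] (D : Measure α) (A : Set α) : ℝ :=
  (D A).toReal

/-- The `r`-ball `B_D(h, r)` around `h` for the distribution `D`. -/
noncomputable def ballD {α : Type*} [MeasurableSpace α] (D : Measure α) (R : Set (Set α))
    (h : Set α) (r : ℝ) : Set (Set α) :=
  {h' | h' ∈ R ∧ prD D (DIS {h, h'}) ≤ r}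

/-- The disagreement coefficient `θ_D^h(σ)` for the distribution `D`. -/
noncomputable def thetaD {α : Type*} [MeasurableSpace α] (D : Measure α) (R : Set (Set α))
    (h : Set α) (σ : ℝ) : ℝ :=
  max 1 (sSup {v : ℝ | ∃ r : ℝ, σ < r ∧ v = prD D (DIS (ballD D R h r)) / r})


lemma volume_box (d : ℕ) : volume (Set.Icc (0 : Fin d → ℝ) 1) = 1 := by
  rw [← Set.pi_univ_Icc, volume_pi_pi]
  simp [Real.volume_Icc]

lemma meas_prodset (d : ℕ) (r : ℝ) :
    MeasurableSet {x : Fin d → ℝ | x ∈ Set.Icc 0 1 ∧ ∏ i, x i ≤ r} := by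
  apply (measurableSet_Icc).inter
  exact measurableSet_le (Finset.measurable_prod _ fun i _ => measurable_pi_apply i) measurable_const


lemma prodset_vol : ∀ d : ℕ, 1 ≤ d → ∀ r : ℝ, 0 < r →
    volume {x : Fin d → ℝ | x ∈ Set.Icc 0 1 ∧ ∏ i, x i ≤ r}
      ≤ ENNReal.ofReal (3 ^ d * r * (1 + max 0 (Real.logb 2 (1 / r))) ^ (d - 1)) := by
  intro d hd
  induction d, hd using Nat.le_induction with
  | base =>
    intro r hr
    have hsub : {x : Fin 1 → ℝ | x ∈ Set.Icc 0 1 ∧ ∏ i, x i ≤ r}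
        ⊆ Set.Icc (0 : Fin 1 → ℝ) (fun _ => min 1 r) := by
      rintro x ⟨hx, hp⟩
      rw [Set.mem_Icc] at hx ⊢
      simp only [Fin.prod_univ_one] at hp
      refine ⟨hx.1, fun i => ?_⟩
      have := Fin.eq_zero i
      subst this
      exact le_min (hx.2 0) hp
    calc volume _ ≤ volume (Set.Icc (0 : Fin 1 → ℝ) (fun _ => min 1 r)) := measure_mono hsub
      _ ≤ ENNReal.ofReal (3 ^ 1 * r * (1 + max 0 (Real.logb 2 (1 / r))) ^ (1 - 1)) := by
          rw [← Set.pi_univ_Icc, volume_pi_pi]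
          simp only [Real.volume_Icc, Pi.zero_apply, sub_zero, Finset.prod_const, Finset.card_univ,
            Fintype.card_fin, pow_one]
          refine ENNReal.ofReal_le_ofReal ?_
          have h1 : (1 + max 0 (Real.logb 2 (1 / r))) ^ (1 - 1) = 1 := by norm_num
          rw [h1]
          nlinarith [min_le_right (1:ℝ) r]
  | succ d hd IH =>
    intro r hr
    set L : ℝ := max 0 (Real.logb 2 (1 / r)) with hL
    have hL0 : 0 ≤ L := le_max_left _ _
    set K : ℕ := Nat.ceil L with hK
    -- the measurable equivalence
    set e := MeasurableEquiv.piFinSuccAbove (fun _ : Fin (d+1) => ℝ) 0 with he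
    have mp : MeasurePreserving e := volume_preserving_piFinSuccAbove (fun _ : Fin (d+1) => ℝ) 0
    -- cover sets
    set A : Set (ℝ × (Fin d → ℝ)) :=
      Set.Icc (0:ℝ) ((2:ℝ)⁻¹^(K+1)) ×ˢ (Set.Icc (0 : Fin d → ℝ) 1) with hA
    set B : ℕ → Set (ℝ × (Fin d → ℝ)) := fun k =>
      Set.Ioc ((2:ℝ)⁻¹^(k+1)) ((2:ℝ)⁻¹^k) ×ˢ
        {y : Fin d → ℝ | y ∈ Set.Icc 0 1 ∧ ∏ i, y i ≤ 2^(k+1) * r} with hB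
    set cover : Set (ℝ × (Fin d → ℝ)) := A ∪ ⋃ k ∈ Finset.range (K+1), B k with hcover
    have hcovm : MeasurableSet cover := by
      apply MeasurableSet.union
      · exact measurableSet_Icc.prod measurableSet_Icc
      · exact MeasurableSet.biUnion (Finset.range (K+1)).countable_toSet
          (fun k _ => measurableSet_Ioc.prod (meas_prodset d _))
    -- the inclusion
    have hsub : {x : Fin (d+1) → ℝ | x ∈ Set.Icc 0 1 ∧ ∏ i, x i ≤ r} ⊆ e ⁻¹' cover := by
      rintro x ⟨hx, hp⟩
      rw [Set.mem_Icc] at hx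
      have hxi : ∀ i, 0 ≤ x i ∧ x i ≤ 1 := fun i => ⟨hx.1 i, hx.2 i⟩
      have hex : e x = (x 0, fun j : Fin d => x ((0 : Fin (d+1)).succAbove j)) := rfl
      have hsa : ∀ j : Fin d, (0 : Fin (d+1)).succAbove j = j.succ := fun j => rfl
      have htail : (fun j : Fin d => x ((0 : Fin (d+1)).succAbove j)) ∈ Set.Icc (0 : Fin d → ℝ) 1 := by
        rw [Set.mem_Icc]
        exact ⟨fun j => (hxi _).1, fun j => (hxi _).2⟩
      have hprod : x 0 * ∏ j : Fin d, x j.succ = ∏ i, x i := (Fin.prod_univ_succ x).symm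
      simp only [Set.mem_preimage, hex]
      by_cases hc : x 0 ≤ (2:ℝ)⁻¹^(K+1)
      · exact Or.inl ⟨Set.mem_Icc.mpr ⟨(hxi 0).1, hc⟩, htail⟩
      · push_neg at hc
        right
        have hex2 : ∃ j : ℕ, (2:ℝ)⁻¹^j < x 0 := ⟨K+1, hc⟩
        set m := Nat.find hex2 with hm
        have hmlt : (2:ℝ)⁻¹^m < x 0 := Nat.find_spec hex2
        have hm0 : m ≠ 0 := by
          intro h0
          rw [h0] at hmlt
          simp at hmlt
          linarith [(hxi 0).2]
        have hmle : m ≤ K+1 := Nat.find_le hc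
        have hknot : ¬ ((2:ℝ)⁻¹^(m-1) < x 0) := Nat.find_min hex2 (by omega)
        push_neg at hknot
        have hmem : B (m-1) ⊆ ⋃ k ∈ Finset.range (K+1), B k :=
          Set.subset_biUnion_of_mem (Finset.mem_coe.mpr (Finset.mem_range.mpr (by omega)))
        apply hmem
        have hm1 : m - 1 + 1 = m := by omega
        constructor
        · rw [Set.mem_Ioc, hm1]
          exact ⟨hmlt, hknot⟩
        · refine ⟨htail, ?_⟩
          simp only [hsa]
          have hx0p : 0 < x 0 := lt_trans (by positivity) hmlt
          have h1 : (1:ℝ) ≤ 2^(m-1+1) * x 0 := by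
            rw [hm1]
            have : (2:ℝ)⁻¹^m = ((2:ℝ)^m)⁻¹ := by rw [inv_pow]
            rw [this] at hmlt
            have h2p : (0:ℝ) < (2:ℝ)^m := by positivity
            calc (1:ℝ) = (2:ℝ)^m * ((2:ℝ)^m)⁻¹ := by field_simp
              _ ≤ (2:ℝ)^m * x 0 := by nlinarith
          have hP : x 0 * ∏ j : Fin d, x j.succ ≤ r := by rw [hprod]; exact hp
          nlinarith [pow_pos (zero_lt_two (α := ℝ)) (m-1+1)]
    -- measure computation
    have hvol : volume {x : Fin (d+1) → ℝ | x ∈ Set.Icc 0 1 ∧ ∏ i, x i ≤ r}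
        ≤ volume cover := by
      calc volume _ ≤ volume (e ⁻¹' cover) := measure_mono hsub
        _ = volume cover := mp.measure_preimage hcovm.nullMeasurableSet
    -- measure of the cover
    have hAv : volume A = ENNReal.ofReal ((2:ℝ)⁻¹^(K+1)) := by
      rw [hA, Measure.volume_eq_prod ℝ (Fin d → ℝ), Measure.prod_prod, Real.volume_Icc, volume_box d, mul_one, sub_zero]
    have hBk : ∀ k, volume (B k) ≤ ENNReal.ofReal (3^d * r * (1+L)^(d-1)) := by
      intro k
      have hIoc : volume (Set.Ioc ((2:ℝ)⁻¹^(k+1)) ((2:ℝ)⁻¹^k)) = ENNReal.ofReal ((2:ℝ)⁻¹^(k+1)) := by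
        rw [Real.volume_Ioc]
        congr 1
        ring
      have hrk : (0:ℝ) < 2^(k+1) * r := by positivity
      have hLk : max 0 (Real.logb 2 (1 / (2^(k+1) * r))) ≤ L := by
        rw [hL]
        apply max_le_max le_rfl
        apply Real.logb_le_logb_of_le one_lt_two (by positivity)
        rw [div_le_div_iff₀ (by positivity) hr]
        nlinarith [one_le_pow₀ (by norm_num : (1:ℝ) ≤ 2) (n := k+1)]
      have hIH := IH (2^(k+1) * r) hrk
      have hIH2 : volume {y : Fin d → ℝ | y ∈ Set.Icc 0 1 ∧ ∏ i, y i ≤ 2^(k+1) * r}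
          ≤ ENNReal.ofReal (3 ^ d * (2^(k+1)*r) * (1 + L) ^ (d - 1)) := by
        refine hIH.trans (ENNReal.ofReal_le_ofReal ?_)
        have hpow : (1 + max 0 (Real.logb 2 (1 / (2^(k+1) * r))))^(d-1) ≤ (1+L)^(d-1) :=
          pow_le_pow_left₀ (by positivity) (by linarith) _
        exact mul_le_mul_of_nonneg_left hpow (by positivity)
      calc volume (B k) = volume (Set.Ioc ((2:ℝ)⁻¹^(k+1)) ((2:ℝ)⁻¹^k)) *
              volume {y : Fin d → ℝ | y ∈ Set.Icc 0 1 ∧ ∏ i, y i ≤ 2^(k+1) * r} := by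
            rw [hB, Measure.volume_eq_prod ℝ (Fin d → ℝ), Measure.prod_prod]
        _ ≤ ENNReal.ofReal ((2:ℝ)⁻¹^(k+1)) * ENNReal.ofReal (3 ^ d * (2^(k+1)*r) * (1 + L) ^ (d - 1)) := by
            rw [hIoc]; exact mul_le_mul_right hIH2 _
        _ = ENNReal.ofReal ((2:ℝ)⁻¹^(k+1) * (3 ^ d * (2^(k+1)*r) * (1 + L) ^ (d - 1))) :=
            (ENNReal.ofReal_mul (by positivity)).symm
        _ = ENNReal.ofReal (3^d * r * (1+L)^(d-1)) := by
            congr 1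
            have h2 : (2:ℝ)⁻¹^(k+1) * 2^(k+1) = 1 := by
              rw [inv_pow]
              field_simp
            linear_combination h2 * (3^d * r * (1+L)^(d-1))
    -- sum up
    have hsum : volume cover ≤ ENNReal.ofReal ((2:ℝ)⁻¹^(K+1)) +
        (K+1 : ℕ) * ENNReal.ofReal (3^d * r * (1+L)^(d-1)) := by
      rw [hcover]
      refine (measure_union_le _ _).trans ?_
      refine add_le_add hAv.le ?_
      refine (measure_biUnion_finset_le _ _).trans ?_
      calc ∑ k ∈ Finset.range (K+1), volume (B k)
          ≤ ∑ _k ∈ Finset.range (K+1), ENNReal.ofReal (3^d * r * (1+L)^(d-1)) :=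
            Finset.sum_le_sum fun k _ => hBk k
        _ = (K+1 : ℕ) * ENNReal.ofReal (3^d * r * (1+L)^(d-1)) := by
            rw [Finset.sum_const, Finset.card_range, nsmul_eq_mul]
    -- real arithmetic
    have hq : (2:ℝ)⁻¹^(K+1) ≤ r := by
      rcases le_or_gt 1 r with h1 | h1
      · exact le_trans (pow_le_one₀ (by norm_num) (by norm_num)) h1
      · have hLpos : L = Real.logb 2 (1/r) := by
          rw [hL, max_eq_right]
          apply Real.logb_nonneg one_lt_two
          rw [le_div_iff₀ hr]; linarith
        have h2K : (1:ℝ)/r ≤ (2:ℝ)^K := by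
          have h2L : (2:ℝ)^(L:ℝ) = 1/r := by
            rw [hLpos]
            exact Real.rpow_logb (by norm_num) (by norm_num) (by positivity)
          calc (1:ℝ)/r = (2:ℝ)^(L:ℝ) := h2L.symm
            _ ≤ (2:ℝ)^((K:ℕ):ℝ) := by
                apply Real.rpow_le_rpow_of_exponent_le (by norm_num)
                exact Nat.le_ceil L
            _ = (2:ℝ)^(K:ℕ) := by rw [Real.rpow_natCast]
        have hKpos : (0:ℝ) < (2:ℝ)^K := by positivity
        calc (2:ℝ)⁻¹^(K+1) ≤ (2:ℝ)⁻¹^K := by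
              apply pow_le_pow_of_le_one (by norm_num) (by norm_num)
              omega
          _ = ((2:ℝ)^K)⁻¹ := by rw [inv_pow]
          _ ≤ ((1:ℝ)/r)⁻¹ := by
              apply inv_anti₀ (by positivity) h2K
          _ = r := by field_simp
    have hKb : ((K:ℝ)+1) ≤ 2*(1+L) := by
      have := Nat.ceil_lt_add_one hL0
      have : (K:ℝ) < L + 1 := by exact_mod_cast this
      linarith
    have hpowL : (1+L)^(d-1) * (1+L) = (1+L)^d := by
      rw [← pow_succ]
      congr 1
      omega
    have h1L : (1:ℝ) ≤ (1+L)^d := one_le_pow₀ (by linarith)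
    have hfinal : (2:ℝ)⁻¹^(K+1) + ((K:ℝ)+1) * (3^d * r * (1+L)^(d-1)) ≤
        3^(d+1) * r * (1+L)^d := by
      have h3 : (1:ℝ) ≤ 3^d := one_le_pow₀ (by norm_num)
      have hp1 : (0:ℝ) ≤ (1+L)^(d-1) := by positivity
      have step : ((K:ℝ)+1) * (3^d * r * (1+L)^(d-1)) ≤ 2 * (3^d * r * (1+L)^d) := by
        calc ((K:ℝ)+1) * (3^d * r * (1+L)^(d-1)) ≤ (2*(1+L)) * (3^d * r * (1+L)^(d-1)) := by
              apply mul_le_mul_of_nonneg_right hKb (by positivity)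
          _ = 2 * (3^d * r * ((1+L)^(d-1) * (1+L))) := by ring
          _ = 2 * (3^d * r * (1+L)^d) := by rw [hpowL]
      have hr1 : r ≤ 3^d * r * (1+L)^d := by
        have h4 : (1:ℝ) ≤ 3^d * (1+L)^d := by nlinarith
        calc r = r * 1 := (mul_one r).symm
          _ ≤ r * (3^d * (1+L)^d) := by
              apply mul_le_mul_of_nonneg_left h4 hr.le
          _ = 3^d * r * (1+L)^d := by ring
      calc (2:ℝ)⁻¹^(K+1) + ((K:ℝ)+1) * (3^d * r * (1+L)^(d-1))
          ≤ r + 2 * (3^d * r * (1+L)^d) := add_le_add hq step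
        _ ≤ 3^d * r * (1+L)^d + 2 * (3^d * r * (1+L)^d) := by linarith
        _ = 3^(d+1) * r * (1+L)^d := by ring
    have hnat : ((K+1 : ℕ) : ℝ≥0∞) * ENNReal.ofReal (3^d * r * (1+L)^(d-1))
        = ENNReal.ofReal (((K:ℝ)+1) * (3^d * r * (1+L)^(d-1))) := by
      rw [← ENNReal.ofReal_natCast (K+1), ← ENNReal.ofReal_mul (by positivity)]
      push_cast
      ring_nf
    refine hvol.trans (hsum.trans ?_)
    rw [hnat, ← ENNReal.ofReal_add (by positivity) (by positivity)]
    apply ENNReal.ofReal_le_ofReal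
    simpa using hfinal

lemma reflect_vol (d : ℕ) (ε : Fin d → Bool) (r : ℝ) :
    volume {x : Fin d → ℝ | x ∈ Set.Icc 0 1 ∧ ∏ i, (if ε i then 1 - x i else x i) ≤ r}
      = volume {x : Fin d → ℝ | x ∈ Set.Icc 0 1 ∧ ∏ i, x i ≤ r} := by
  classical
  set f : Fin d → ℝ → ℝ := fun i t => if ε i then 1 - t else t with hf
  have hfm : ∀ i, MeasurePreserving (f i) (volume : Measure ℝ) volume := by
    intro i
    by_cases hi : ε i
    · simp only [hf, hi, if_true]
      have h1 : MeasurePreserving (fun t : ℝ => 1 + -t) volume volume :=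
        (measurePreserving_add_left volume 1).comp (Measure.measurePreserving_neg volume)
      have : (fun t : ℝ => 1 - t) = fun t : ℝ => 1 + -t := by
        funext t; ring
      rwa [this]
    · simp only [hf, hi, if_false]
      exact MeasurePreserving.id volume
  have hT : MeasurePreserving (fun x : Fin d → ℝ => fun i => f i (x i)) volume volume :=
    volume_preserving_pi hfm
  have hmemf : ∀ x : Fin d → ℝ,
      ((fun i => f i (x i)) ∈ Set.Icc (0 : Fin d → ℝ) 1) ↔ x ∈ Set.Icc 0 1 := by
    intro x
    rw [Set.mem_Icc, Set.mem_Icc]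
    constructor
    · rintro ⟨h0, h1⟩
      refine ⟨fun i => ?_, fun i => ?_⟩
      · have a0 := h0 i; have a1 := h1 i
        by_cases hi : ε i
        · simp only [hf, hi, if_true] at a0 a1
          have : (1:Fin d → ℝ) i = 1 := rfl
          rw [this] at a1
          have : (0:Fin d → ℝ) i = 0 := rfl
          rw [this] at a0
          simp only [Pi.zero_apply]
          linarith
        · simpa [hf, hi] using a0
      · have a0 := h0 i; have a1 := h1 i
        by_cases hi : ε i
        · simp only [hf, hi, if_true] at a0 a1
          have e1 : (1:Fin d → ℝ) i = 1 := rfl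
          rw [e1] at a1
          have e0 : (0:Fin d → ℝ) i = 0 := rfl
          rw [e0] at a0
          simp only [Pi.one_apply]
          linarith
        · simpa [hf, hi] using a1
    · rintro ⟨h0, h1⟩
      refine ⟨fun i => ?_, fun i => ?_⟩
      · have a0 := h0 i; have a1 := h1 i
        simp only [Pi.zero_apply] at a0 ⊢
        simp only [Pi.one_apply] at a1
        by_cases hi : ε i <;> simp [hf, hi] <;> linarith
      · have a0 := h0 i; have a1 := h1 i
        simp only [Pi.zero_apply] at a0
        simp only [Pi.one_apply] at a1 ⊢
        by_cases hi : ε i <;> simp [hf, hi] <;> linarith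
  have hset : {x : Fin d → ℝ | x ∈ Set.Icc 0 1 ∧ ∏ i, (if ε i then 1 - x i else x i) ≤ r}
      = (fun x : Fin d → ℝ => fun i => f i (x i)) ⁻¹'
        {x : Fin d → ℝ | x ∈ Set.Icc 0 1 ∧ ∏ i, x i ≤ r} := by
    ext x
    constructor
    · rintro ⟨hx, hp⟩
      exact ⟨(hmemf x).mpr hx, hp⟩
    · rintro ⟨hx, hp⟩
      exact ⟨(hmemf x).mp hx, hp⟩
  rw [hset, hT.measure_preimage (meas_prodset d r).nullMeasurableSet]

lemma corner_bound {d : ℕ} (h h₁ : Set (Fin d → ℝ)) (hh₁ : IsHalfspace h₁)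
    (hdisj : Disjoint h (Set.Icc 0 1)) (x : Fin d → ℝ) (hx : x ∈ Set.Icc (0 : Fin d → ℝ) 1)
    (hxh1 : x ∈ h₁) (r : ℝ)
    (hr : prD (volume.restrict (Set.Icc (0 : Fin d → ℝ) 1)) (DIS {h, h₁}) ≤ r) :
    ∃ ε : Fin d → Bool, ∏ i, (if ε i then 1 - x i else x i) ≤ r := by
  classical
  obtain ⟨a, -, b, rfl⟩ := hh₁
  rw [Set.mem_Icc] at hx
  refine ⟨fun i => decide (0 ≤ a i), ?_⟩
  set lo : Fin d → ℝ := fun i => if 0 ≤ a i then x i else 0 with hlo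
  set hi : Fin d → ℝ := fun i => if 0 ≤ a i then 1 else x i with hhi
  have hloh : ∀ i, lo i ≤ hi i := by
    intro i
    by_cases hai : 0 ≤ a i
    · simp only [hlo, hhi, hai, if_true]
      exact hx.2 i
    · simp only [hlo, hhi, hai, if_false]
      exact hx.1 i
  have hQbox : Set.Icc lo hi ⊆ Set.Icc (0 : Fin d → ℝ) 1 := by
    intro y hy
    rw [Set.mem_Icc] at hy ⊢
    constructor
    · intro i
      refine le_trans ?_ (hy.1 i)
      by_cases hai : 0 ≤ a i
      · simp only [hlo, hai, if_true]
        exact hx.1 i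
      · simp only [hlo, hai, if_false]
        exact le_rfl
    · intro i
      refine le_trans (hy.2 i) ?_
      by_cases hai : 0 ≤ a i
      · simp only [hhi, hai, if_true]
        exact le_rfl
      · simp only [hhi, hai, if_false]
        exact hx.2 i
  have hQh1 : Set.Icc lo hi ⊆ {y : Fin d → ℝ | b ≤ ∑ i, a i * y i} := by
    intro y hy
    rw [Set.mem_Icc] at hy
    have hterm : ∀ i ∈ Finset.univ, a i * x i ≤ a i * y i := by
      intro i _
      by_cases hai : 0 ≤ a i
      · have : x i ≤ y i := by
          have := hy.1 i; simpa [hlo, hai] using this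
        exact mul_le_mul_of_nonneg_left this hai
      · push_neg at hai
        have : y i ≤ x i := by
          have := hy.2 i; simpa [hhi, hai.not_ge] using this
        nlinarith
    exact le_trans hxh1 (Finset.sum_le_sum hterm)
  have hQdis : Set.Icc lo hi ⊆ DIS {h, {y : Fin d → ℝ | b ≤ ∑ i, a i * y i}} := by
    intro y hy
    refine ⟨_, Set.mem_insert_iff.mpr (Or.inr rfl), h, Set.mem_insert _ _, hQh1 hy, ?_⟩
    exact fun hyh => (Set.disjoint_left.mp hdisj) hyh (hQbox hy)
  have hvolQ : volume (Set.Icc lo hi) = ∏ i, ENNReal.ofReal (hi i - lo i) := by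
    rw [← Set.pi_univ_Icc, volume_pi_pi]
    simp [Real.volume_Icc]
  have hmono : volume (Set.Icc lo hi) ≤
      (volume.restrict (Set.Icc (0 : Fin d → ℝ) 1)) (DIS {h, {y : Fin d → ℝ | b ≤ ∑ i, a i * y i}}) := by
    rw [Measure.restrict_apply' measurableSet_Icc]
    exact measure_mono (Set.subset_inter hQdis hQbox)
  have hfin : (volume.restrict (Set.Icc (0 : Fin d → ℝ) 1))
      (DIS {h, {y : Fin d → ℝ | b ≤ ∑ i, a i * y i}}) ≠ ⊤ := by
    rw [Measure.restrict_apply' measurableSet_Icc]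
    refine ne_top_of_le_ne_top ?_ (measure_mono Set.inter_subset_right)
    rw [volume_box]
    exact ENNReal.one_ne_top
  have htr : (volume (Set.Icc lo hi)).toReal ≤ r := by
    refine le_trans (ENNReal.toReal_mono hfin hmono) hr
  have : (volume (Set.Icc lo hi)).toReal = ∏ i, (hi i - lo i) := by
    rw [hvolQ, ENNReal.toReal_prod]
    congr 1
    funext i
    rw [ENNReal.toReal_ofReal (by linarith [hloh i])]
  rw [this] at htr
  refine le_trans (le_of_eq ?_) htr
  apply Finset.prod_congr rfl
  intro i _
  by_cases hai : 0 ≤ a i <;> simp [hhi, hlo, hai]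


lemma log_aux {σ r : ℝ} (hσ : 0 < σ) (hr : σ < r) :
    1 + max 0 (Real.logb 2 (1 / r)) ≤ 3 * max 1 (Real.log (1 / σ)) := by
  set M := max 1 (Real.log (1 / σ)) with hM
  have hM1 : (1:ℝ) ≤ M := le_max_left _ _
  have hrpos : 0 < r := lt_trans hσ hr
  have h1 : Real.logb 2 (1 / r) ≤ Real.logb 2 (1 / σ) := by
    apply Real.logb_le_logb_of_le one_lt_two (by positivity)
    exact one_div_le_one_div_of_le hσ hr.le
  have h2 : Real.logb 2 (1 / σ) ≤ 2 * M := by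
    rcases le_or_gt (Real.log (1 / σ)) 0 with hlog | hlog
    · have : Real.logb 2 (1 / σ) ≤ 0 := by
        rw [Real.logb]
        exact div_nonpos_of_nonpos_of_nonneg hlog (Real.log_nonneg one_le_two)
      linarith
    · have hlM : Real.log (1 / σ) ≤ M := le_max_right _ _
      have hl2 : (0.6931471803:ℝ) < Real.log 2 := Real.log_two_gt_d9
      rw [Real.logb, div_le_iff₀ (by linarith)]
      nlinarith
  have h3 : max 0 (Real.logb 2 (1 / r)) ≤ 2 * M := by
    apply max_le (by linarith) (le_trans h1 h2)
  linarith

/-- For the uniform distribution on the unit box `[0,1]^d` and any halfspace `h`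
disjoint from the box, `θ_U^h(σ) = O(log^{d-1}(1/σ))` for all `σ > 0`,
the constant depending only on `d`. -/
theorem stmt7 (d : ℕ) (hd : 1 ≤ d) :
    ∃ C : ℝ, 0 < C ∧
      ∀ h : Set (Fin d → ℝ), IsHalfspace h → Disjoint h (Set.Icc 0 1) →
        ∀ σ : ℝ, 0 < σ →
          thetaD (volume.restrict (Set.Icc (0 : Fin d → ℝ) 1))
              {h' | IsHalfspace h'} h σ
            ≤ C * (max 1 (Real.log (1 / σ))) ^ (d - 1) := by
  classical
  refine ⟨2^d * 3^d * 3^(d-1), by positivity, ?_⟩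
  intro h hh hdisj σ hσ
  set D := volume.restrict (Set.Icc (0 : Fin d → ℝ) 1) with hD
  set R : Set (Set (Fin d → ℝ)) := {h' | IsHalfspace h'} with hR
  set M := max 1 (Real.log (1 / σ)) with hM
  have hM1 : (1:ℝ) ≤ M := le_max_left _ _
  have hMp : (1:ℝ) ≤ M ^ (d-1) := one_le_pow₀ hM1
  have key : ∀ v ∈ {v : ℝ | ∃ r : ℝ, σ < r ∧ v = prD D (DIS (ballD D R h r)) / r},
      v ≤ 2^d * 3^d * 3^(d-1) * M ^ (d-1) := by
    rintro v ⟨r, hσr, rfl⟩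
    have hrpos : 0 < r := lt_trans hσ hσr
    set L := max 0 (Real.logb 2 (1 / r)) with hL
    -- inclusion into reflected corner sets
    have hincl : DIS (ballD D R h r) ∩ Set.Icc (0 : Fin d → ℝ) 1 ⊆
        ⋃ ε : Fin d → Bool,
          {x : Fin d → ℝ | x ∈ Set.Icc 0 1 ∧ ∏ i, (if ε i then 1 - x i else x i) ≤ r} := by
      rintro x ⟨hxd, hxbox⟩
      obtain ⟨h₁, ⟨hh₁, hprd⟩, h₂, hh₂, hx1, hx2⟩ := hxd
      obtain ⟨ε, hε⟩ := corner_bound h h₁ hh₁ hdisj x hxbox hx1 r hprd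
      exact Set.mem_iUnion.mpr ⟨ε, hxbox, hε⟩
    -- measure bound
    have hmeas : D (DIS (ballD D R h r)) ≤
        ENNReal.ofReal (2^d * (3 ^ d * r * (1 + L) ^ (d - 1))) := by
      rw [hD, Measure.restrict_apply' measurableSet_Icc]
      refine le_trans (measure_mono hincl) ?_
      refine le_trans (measure_iUnion_fintype_le volume _) ?_
      have hone : ∀ ε : Fin d → Bool,
          volume {x : Fin d → ℝ | x ∈ Set.Icc 0 1 ∧ ∏ i, (if ε i then 1 - x i else x i) ≤ r}
            ≤ ENNReal.ofReal (3 ^ d * r * (1 + L) ^ (d - 1)) := by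
        intro ε
        rw [reflect_vol]
        exact prodset_vol d hd r hrpos
      refine le_trans (Finset.sum_le_sum fun ε _ => hone ε) ?_
      rw [Finset.sum_const, Finset.card_univ, nsmul_eq_mul]
      have hcard : (Fintype.card (Fin d → Bool) : ℝ≥0∞) = ((2^d : ℕ) : ℝ≥0∞) := by
        norm_num [Fintype.card_fun]
      rw [hcard, ← ENNReal.ofReal_natCast (2^d), ← ENNReal.ofReal_mul (by positivity)]
      apply ENNReal.ofReal_le_ofReal
      push_cast
      exact le_of_eq (by ring)
    have hprd_le : prD D (DIS (ballD D R h r)) ≤ 2^d * (3^d * r * (1+L)^(d-1)) :=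
      ENNReal.toReal_le_of_le_ofReal (by positivity) hmeas
    have hLM : (1 + L) ≤ 3 * M := log_aux hσ hσr
    rw [div_le_iff₀ hrpos]
    calc prD D (DIS (ballD D R h r)) ≤ 2^d * (3^d * r * (1+L)^(d-1)) := hprd_le
      _ = (2^d * 3^d * (1+L)^(d-1)) * r := by ring
      _ ≤ (2^d * 3^d * (3^(d-1) * M^(d-1))) * r := by
          apply mul_le_mul_of_nonneg_right ?_ hrpos.le
          apply mul_le_mul_of_nonneg_left ?_ (by positivity)
          rw [← mul_pow]
          exact pow_le_pow_left₀ (by positivity) hLM _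
      _ = 2^d*3^d*3^(d-1) * M^(d-1) * r := by ring
  have hC1 : (1:ℝ) ≤ 2^d * 3^d * 3^(d-1) := by
    have a1 : (1:ℝ) ≤ 2^d := one_le_pow₀ one_le_two
    have a2 : (1:ℝ) ≤ 3^d := one_le_pow₀ (by norm_num)
    have a3 : (1:ℝ) ≤ 3^(d-1) := one_le_pow₀ (by norm_num)
    have a12 : (1:ℝ) ≤ 2^d * 3^d := by nlinarith
    nlinarith
  have h11 : (1:ℝ) ≤ 2^d * 3^d * 3^(d-1) * M ^ (d-1) := by
    have := mul_le_mul hC1 hMp (by norm_num) (by positivity)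
    linarith [this]
  rw [thetaD]
  apply max_le
  · exact h11
  · exact Real.sSup_le key (by linarith)
end

section
/- Let d = O(1) be constant, let U be the uniform distribution on the unit ball {x ∈ ℝ^d : Σ_{i=1}^d x[i]² ≤ 1}, and let R be the family of all halfspaces in ℝ^d. For any halfspace h ∈ R disjoint from the unit ball, the disagreement coefficient satisfies θ_U^h(σ) = O((1/σ)^{(d−1)/(d+1)}) for all σ > 0 (with the constant depending only on d). -/
open Set MeasureTheory
open scoped ENNReal

/-- The unit ball `{x ∈ ℝ^d | Σ_i x[i]² ≤ 1}`. -/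
def unitBall (d : ℕ) : Set (Fin d → ℝ) := {x | ∑ i, (x i) ^ 2 ≤ 1}

open scoped Pointwise RealInnerProductSpace

variable {d : ℕ}

lemma meas_sumsq : Measurable fun x : Fin d → ℝ => ∑ i, x i ^ 2 := by fun_prop

lemma meas_dot (a : Fin d → ℝ) : Measurable fun x : Fin d → ℝ => ∑ i, a i * x i := by fun_prop

lemma measurableSet_unitBall : MeasurableSet (unitBall d) :=
  measurableSet_le meas_sumsq measurable_const

lemma volume_unitBall_lt_top : volume (unitBall d) < ⊤ := by
  have hsub : unitBall d ⊆ Set.pi univ fun _ : Fin d => Icc (-1 : ℝ) 1 := by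
    intro x hx i _
    have h1 : x i ^ 2 ≤ ∑ j, x j ^ 2 :=
      Finset.single_le_sum (fun j _ => sq_nonneg (x j)) (Finset.mem_univ i)
    have h2 : x i ^ 2 ≤ 1 := h1.trans hx
    constructor <;> nlinarith
  calc volume (unitBall d) ≤ volume (Set.pi univ fun _ : Fin d => Icc (-1 : ℝ) 1) :=
        measure_mono hsub
    _ = ∏ _i : Fin d, volume (Icc (-1 : ℝ) 1) := volume_pi_pi _
    _ < ⊤ := by
        simp [Real.volume_Icc]

lemma volume_unitBall_pos (hd : 1 ≤ d) : 0 < volume (unitBall d) := by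
  have hsub : (Set.pi univ fun _ : Fin d => Icc (0 : ℝ) (Real.sqrt (1 / d))) ⊆ unitBall d := by
    intro x hx
    have hxi : ∀ i, x i ^ 2 ≤ 1 / d := by
      intro i
      obtain ⟨hl, hr⟩ := hx i (Set.mem_univ i)
      have h1 : x i ^ 2 ≤ Real.sqrt (1 / d) ^ 2 := by nlinarith
      rwa [Real.sq_sqrt (by positivity)] at h1
    have : ∑ i, x i ^ 2 ≤ ∑ _i : Fin d, (1 : ℝ) / d :=
      Finset.sum_le_sum fun i _ => hxi i
    simp only [Finset.sum_const, Finset.card_univ, Fintype.card_fin, nsmul_eq_mul] at this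
    have hd' : (0:ℝ) < d := by exact_mod_cast hd
    calc ∑ i, x i ^ 2 ≤ (d:ℝ) * (1 / d) := this
      _ = 1 := by field_simp
  refine lt_of_lt_of_le ?_ (measure_mono hsub)
  rw [volume_pi_pi]
  simp [Real.volume_Icc]
  have hd' : (0:ℝ) < d := by exact_mod_cast hd
  have : (0:ℝ≥0∞) < ENNReal.ofReal (Real.sqrt (1/d)) := by
    rw [ENNReal.ofReal_pos]; positivity
  positivity

noncomputable def capC (d : ℕ) : ℝ := (1/2) * (2 * Real.sqrt (3/(4*(d:ℝ))))^(d-1)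

lemma capC_pos (hd : 1 ≤ d) : 0 < capC d := by
  have hd' : (0:ℝ) < d := by exact_mod_cast hd
  unfold capC
  positivity

/-- `∑ y i ^ 2 = ‖y‖ ^ 2` in Euclidean space. -/

lemma sumsq_eq_normsq (y : EuclideanSpace ℝ (Fin d)) : ∑ i, y i ^ 2 = ‖y‖ ^ 2 := by
  rw [EuclideanSpace.norm_eq, Real.sq_sqrt (by positivity)]
  congr 1; ext i; rw [Real.norm_eq_abs, sq_abs]

/-- Volume of a Euclidean-aligned box inside the coordinate-aligned cap. -/

lemma cap0_volume_lower (hd : 1 ≤ d) {s : ℝ} (hs0 : 0 < s) (hs1 : s ≤ 1) :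
    ENNReal.ofReal (capC d * (s * Real.sqrt s ^ (d-1))) ≤
      volume {x : Fin d → ℝ | ∑ i, x i ^ 2 ≤ 1 ∧ 1 - s ≤ x ⟨0, hd⟩} := by
  set i0 : Fin d := ⟨0, hd⟩
  set κ : ℝ := Real.sqrt (3*s/(4*(d:ℝ))) with hκ
  have hd' : (0:ℝ) < d := by exact_mod_cast hd
  have hκ0 : 0 ≤ κ := Real.sqrt_nonneg _
  set I : Fin d → Set ℝ := fun i => if i = i0 then Icc (1-s) (1-s/2) else Icc (-κ) κ with hI
  have hsub : Set.pi univ I ⊆ {x : Fin d → ℝ | ∑ i, x i ^ 2 ≤ 1 ∧ 1 - s ≤ x i0} := by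
    intro x hx
    have hx0 : x i0 ∈ Icc (1-s) (1-s/2) := by
      have := hx i0 (Set.mem_univ i0)
      simp only [hI, if_pos rfl] at this; exact this
    have hxo : ∀ i, i ≠ i0 → x i ^ 2 ≤ 3*s/(4*(d:ℝ)) := by
      intro i hi
      have := hx i (Set.mem_univ i)
      simp only [hI, if_neg hi] at this
      have h2 : x i ^ 2 ≤ κ ^ 2 := sq_le_sq' this.1 this.2
      rwa [Real.sq_sqrt (by positivity)] at h2
    refine ⟨?_, hx0.1⟩
    have hsplit : ∑ i, x i ^ 2 = x i0 ^ 2 + ∑ i ∈ Finset.univ.erase i0, x i ^ 2 :=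
      (Finset.add_sum_erase _ (fun i => x i ^ 2) (Finset.mem_univ i0)).symm
    have hrest : ∑ i ∈ Finset.univ.erase i0, x i ^ 2 ≤ (d-1 : ℝ) * (3*s/(4*(d:ℝ))) := by
      have hcard : (Finset.univ.erase i0).card = d - 1 := by
        rw [Finset.card_erase_of_mem (Finset.mem_univ i0), Finset.card_univ, Fintype.card_fin]
      have := Finset.sum_le_card_nsmul (Finset.univ.erase i0) (fun i => x i ^ 2)
        (3*s/(4*(d:ℝ))) (fun i hi => hxo i (Finset.ne_of_mem_erase hi))
      rw [hcard, nsmul_eq_mul] at this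
      refine this.trans ?_
      have : ((d-1 : ℕ) : ℝ) ≤ (d - 1 : ℝ) := by
        rw [Nat.cast_sub hd]; simp
      exact mul_le_mul_of_nonneg_right this (by positivity)
    have hA : (d-1 : ℝ) * (3*s/(4*(d:ℝ))) ≤ 3*s/4 := by
      have h0 : (d-1 : ℝ) * (3*s/(4*(d:ℝ))) = 3*s/4 - 3*s/(4*(d:ℝ)) := by
        field_simp
      have h1 : 0 ≤ 3*s/(4*(d:ℝ)) := by positivity
      linarith
    have hx0sq : x i0 ^ 2 ≤ (1 - s/2) ^ 2 := by nlinarith [hx0.1, hx0.2]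
    rw [hsplit]
    nlinarith [hrest, hA, hx0sq]
  refine le_trans ?_ (measure_mono hsub)
  rw [volume_pi_pi]
  have hκs : κ = Real.sqrt (3/(4*(d:ℝ))) * Real.sqrt s := by
    rw [hκ, ← Real.sqrt_mul (by positivity)]
    congr 1; ring
  have hprod : ∏ i, volume (I i) = ENNReal.ofReal (s/2) * ENNReal.ofReal (2*κ) ^ (d-1) := by
    rw [← Finset.mul_prod_erase Finset.univ (fun i => volume (I i)) (Finset.mem_univ i0)]
    have h1 : volume (I i0) = ENNReal.ofReal (s/2) := by
      simp only [hI, if_pos rfl, Real.volume_Icc]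
      congr 1; ring
    have h2 : ∀ i ∈ Finset.univ.erase i0, volume (I i) = ENNReal.ofReal (2*κ) := by
      intro i hi
      have hne : i ≠ i0 := Finset.ne_of_mem_erase hi
      simp only [hI, if_neg hne, Real.volume_Icc]
      congr 1; ring
    rw [h1, Finset.prod_congr rfl h2, Finset.prod_const,
      Finset.card_erase_of_mem (Finset.mem_univ i0), Finset.card_univ, Fintype.card_fin]
  rw [hprod, ← ENNReal.ofReal_pow (by positivity), ← ENNReal.ofReal_mul (by positivity)]
  apply ENNReal.ofReal_le_ofReal
  apply le_of_eq
  rw [capC, hκs]; ring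

lemma cap_volume_lower (hd : 1 ≤ d) (a : Fin d → ℝ) (ha : ∑ i, a i ^ 2 = 1)
    {s : ℝ} (hs0 : 0 < s) (hs1 : s ≤ 1) :
    ENNReal.ofReal (capC d * (s * Real.sqrt s ^ (d-1))) ≤
      volume {x : Fin d → ℝ | ∑ i, x i ^ 2 ≤ 1 ∧ 1 - s ≤ ∑ i, a i * x i} := by
  classical
  set i0 : Fin d := ⟨0, hd⟩
  -- view `a` as an element of Euclidean space
  set aE : EuclideanSpace ℝ (Fin d) := WithLp.toLp 2 a with haE
  have haE1 : ‖aE‖ = 1 := by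
    rw [EuclideanSpace.norm_eq]
    have : ∑ i, ‖aE i‖ ^ 2 = 1 := by
      simpa [Real.norm_eq_abs, sq_abs] using ha
    rw [this, Real.sqrt_one]
  -- an orthonormal basis whose `i0`-th vector is `aE`
  have hortho : Orthonormal ℝ (({i0} : Set (Fin d)).restrict fun _ => aE) := by
    rw [orthonormal_iff_ite]
    intro i j
    have hij : i = j := Subsingleton.elim i j
    subst hij
    simp only [Set.restrict_apply, if_pos rfl, PiLp.inner_apply, RCLike.inner_apply,
      conj_trivial]
    exact (by simpa [sq] using ha : ∑ x, a x * a x = 1)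
  obtain ⟨b, hb⟩ := hortho.exists_orthonormalBasis_extension_of_card_eq
    (by simp [finrank_euclideanSpace]) 
  have hb0 : b i0 = aE := hb i0 rfl
  -- the cap in Pi-space, pulled back to Euclidean space
  have hmeas0 : MeasurableSet {x : Fin d → ℝ | ∑ i, x i ^ 2 ≤ 1 ∧ 1 - s ≤ x i0} := by
    apply MeasurableSet.inter
    · exact measurableSet_le meas_sumsq measurable_const
    · exact measurableSet_le measurable_const (measurable_pi_apply i0)
  have hmeasA : MeasurableSet {x : Fin d → ℝ | ∑ i, x i ^ 2 ≤ 1 ∧ 1 - s ≤ ∑ i, a i * x i} := by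
    apply MeasurableSet.inter
    · exact measurableSet_le meas_sumsq measurable_const
    · exact measurableSet_le measurable_const (meas_dot a)
  have hψ := EuclideanSpace.volume_preserving_symm_measurableEquiv_toLp (Fin d)
  have htransfer : ∀ (S : Set (Fin d → ℝ)), MeasurableSet S →
      volume S = volume ((MeasurableEquiv.toLp 2 (Fin d → ℝ)).symm ⁻¹' S) := by
    intro S hS
    exact (hψ.measure_preimage hS.nullMeasurableSet).symm
  rw [htransfer _ hmeasA]
  -- identify the preimage with a rotated coordinate cap
  have hpre : (MeasurableEquiv.toLp 2 (Fin d → ℝ)).symm ⁻¹'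
        {x : Fin d → ℝ | ∑ i, x i ^ 2 ≤ 1 ∧ 1 - s ≤ ∑ i, a i * x i}
      = b.repr ⁻¹' ((MeasurableEquiv.toLp 2 (Fin d → ℝ)).symm ⁻¹'
        {x : Fin d → ℝ | ∑ i, x i ^ 2 ≤ 1 ∧ 1 - s ≤ x i0}) := by
    ext y
    have h1 : ∑ i, ((MeasurableEquiv.toLp 2 (Fin d → ℝ)).symm y) i ^ 2 = ‖y‖ ^ 2 := by
      have e : ∑ i, ((MeasurableEquiv.toLp 2 (Fin d → ℝ)).symm y) i ^ 2 = ∑ i, y i ^ 2 := rfl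
      rw [e, sumsq_eq_normsq]
    have h2 : ∑ i, ((MeasurableEquiv.toLp 2 (Fin d → ℝ)).symm (b.repr y)) i ^ 2
        = ‖y‖ ^ 2 := by
      have e : ∑ i, ((MeasurableEquiv.toLp 2 (Fin d → ℝ)).symm (b.repr y)) i ^ 2
          = ∑ i, (b.repr y) i ^ 2 := rfl
      rw [e, sumsq_eq_normsq, b.repr.norm_map]
    have h3 : ((MeasurableEquiv.toLp 2 (Fin d → ℝ)).symm (b.repr y)) i0
        = ∑ i, a i * y i := by
      have : b.repr y i0 = ⟪b i0, y⟫ := b.repr_apply_apply y i0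
      have h4 : ((MeasurableEquiv.toLp 2 (Fin d → ℝ)).symm (b.repr y)) i0 = b.repr y i0 := rfl
      rw [h4, this, hb0]
      simp [PiLp.inner_apply, haE, RCLike.inner_apply, conj_trivial, mul_comm]
    simp only [Set.mem_preimage, Set.mem_setOf_eq]
    rw [h1, h2, h3]
    exact Iff.rfl
  rw [hpre, (b.repr.measurePreserving).measure_preimage
    ((hψ.measurable hmeas0).nullMeasurableSet), ← htransfer _ hmeas0]
  exact cap0_volume_lower hd hs0 hs1

lemma sphere_volume_zero {ρ : ℝ} (hρ : 0 < ρ) :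
    volume {x : Fin d → ℝ | ∑ i, x i ^ 2 = ρ ^ 2} = 0 := by
  have hmeas : MeasurableSet {x : Fin d → ℝ | ∑ i, x i ^ 2 = ρ ^ 2} :=
    measurableSet_eq_fun meas_sumsq measurable_const
  have hψ := EuclideanSpace.volume_preserving_symm_measurableEquiv_toLp (Fin d)
  rw [← hψ.measure_preimage hmeas.nullMeasurableSet]
  have hpre : (MeasurableEquiv.toLp 2 (Fin d → ℝ)).symm ⁻¹'
      {x : Fin d → ℝ | ∑ i, x i ^ 2 = ρ ^ 2} = Metric.sphere (0 : EuclideanSpace ℝ (Fin d)) ρ := by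
    ext y
    have e : ∑ i, ((MeasurableEquiv.toLp 2 (Fin d → ℝ)).symm y) i ^ 2 = ∑ i, y i ^ 2 := rfl
    simp only [Set.mem_preimage, Set.mem_setOf_eq, mem_sphere_zero_iff_norm]
    rw [e, sumsq_eq_normsq]
    constructor
    · intro h
      have := congrArg Real.sqrt h
      rwa [Real.sqrt_sq (norm_nonneg y), Real.sqrt_sq hρ.le] at this
    · intro h; rw [h]
  rw [hpre]
  exact Measure.addHaar_sphere_of_ne_zero volume 0 hρ.ne'

lemma scaled_ball_volume {ρ : ℝ} (hρ0 : 0 < ρ) :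
    volume {x : Fin d → ℝ | ∑ i, x i ^ 2 ≤ ρ ^ 2}
      = ENNReal.ofReal (ρ ^ d) * volume (unitBall d) := by
  have hset : {x : Fin d → ℝ | ∑ i, x i ^ 2 ≤ ρ ^ 2} = ρ • unitBall d := by
    ext x
    rw [mem_smul_set_iff_inv_smul_mem₀ hρ0.ne']
    simp only [unitBall, Set.mem_setOf_eq, Pi.smul_apply, smul_eq_mul]
    rw [show ∑ i, (ρ⁻¹ * x i) ^ 2 = ρ⁻¹ ^ 2 * ∑ i, x i ^ 2 by
      rw [Finset.mul_sum]; congr 1; ext i; ring]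
    rw [inv_pow, inv_mul_le_iff₀ (by positivity), mul_one]
  rw [hset, Measure.addHaar_smul]
  congr 2
  simp [abs_of_pos hρ0]

lemma annulus_volume_upper (hd : 1 ≤ d) {t : ℝ} (ht0 : 0 < t) (ht1 : t < 1) :
    volume {x : Fin d → ℝ | ∑ i, x i ^ 2 ≤ 1 ∧ 1 - t ≤ Real.sqrt (∑ i, x i ^ 2)}
      ≤ volume (unitBall d) - ENNReal.ofReal ((1-t) ^ d) * volume (unitBall d) := by
  set ρ : ℝ := 1 - t with hρ
  have hρ0 : 0 < ρ := by simp [hρ]; linarith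
  have hρ1 : ρ ≤ 1 := by simp [hρ]; linarith
  set oB : Set (Fin d → ℝ) := {x | ∑ i, x i ^ 2 < ρ ^ 2} with hoB
  have hoBmeas : MeasurableSet oB := measurableSet_lt meas_sumsq measurable_const
  have hoBsub : oB ⊆ unitBall d := by
    intro x hx
    simp only [hoB, Set.mem_setOf_eq] at hx
    have : ρ ^ 2 ≤ 1 := by nlinarith
    exact le_of_lt (lt_of_lt_of_le hx this)
  have hsub : {x : Fin d → ℝ | ∑ i, x i ^ 2 ≤ 1 ∧ 1 - t ≤ Real.sqrt (∑ i, x i ^ 2)}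
      ⊆ unitBall d \ oB := by
    intro x ⟨hx1, hx2⟩
    refine ⟨hx1, ?_⟩
    simp only [hoB, Set.mem_setOf_eq, not_lt]
    by_contra hc
    push_neg at hc
    have : Real.sqrt (∑ i, x i ^ 2) < Real.sqrt (ρ ^ 2) :=
      Real.sqrt_lt_sqrt (by positivity) hc
    rw [Real.sqrt_sq hρ0.le] at this
    linarith
  refine (measure_mono hsub).trans ?_
  rw [measure_diff hoBsub hoBmeas.nullMeasurableSet
    (lt_of_le_of_lt (measure_mono hoBsub) volume_unitBall_lt_top).ne]
  apply tsub_le_tsub_left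
  -- volume oB ≥ ρ^d * volume (unitBall d)
  have hcB : volume {x : Fin d → ℝ | ∑ i, x i ^ 2 ≤ ρ ^ 2}
      ≤ volume oB + volume {x : Fin d → ℝ | ∑ i, x i ^ 2 = ρ ^ 2} := by
    refine (measure_mono ?_).trans (measure_union_le _ _)
    intro x hx
    have hx' : ∑ i, x i ^ 2 ≤ ρ ^ 2 := hx
    rcases lt_or_eq_of_le hx' with h | h
    · exact Or.inl h
    · exact Or.inr h
  rw [sphere_volume_zero hρ0, add_zero, scaled_ball_volume hρ0] at hcB
  exact hcB

lemma halfspace_normalize {h' : Set (Fin d → ℝ)} (hh : IsHalfspace h') :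
    ∃ a : Fin d → ℝ, (∑ i, a i ^ 2 = 1) ∧ ∃ b : ℝ, h' = {x | b ≤ ∑ i, a i * x i} := by
  obtain ⟨a₀, ha₀, b₀, rfl⟩ := hh
  have hpos : 0 < ∑ i, a₀ i ^ 2 := by
    rcases Function.ne_iff.mp ha₀ with ⟨i, hi⟩
    have : 0 < a₀ i ^ 2 := pow_two_pos_of_ne_zero hi
    exact Finset.sum_pos' (fun j _ => sq_nonneg _) ⟨i, Finset.mem_univ i, this⟩
  set n : ℝ := Real.sqrt (∑ i, a₀ i ^ 2) with hn
  have hn0 : 0 < n := Real.sqrt_pos.mpr hpos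
  refine ⟨fun i => a₀ i / n, ?_, b₀ / n, ?_⟩
  · have : ∑ i, (a₀ i / n) ^ 2 = (∑ i, a₀ i ^ 2) / n ^ 2 := by
      rw [Finset.sum_div]; congr 1; ext i; ring
    rw [this, hn, Real.sq_sqrt hpos.le, div_self hpos.ne']
  · ext x
    simp only [Set.mem_setOf_eq]
    rw [show ∑ i, a₀ i / n * x i = (∑ i, a₀ i * x i) / n by
      rw [Finset.sum_div]; congr 1; ext i; ring]
    exact (div_le_div_iff_of_pos_right hn0).symm

lemma key_bound (hd : 1 ≤ d) (h : Set (Fin d → ℝ)) (hdisj : Disjoint h (unitBall d))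
    {r t : ℝ} (hr : 0 < r) (ht0 : 0 < t) (ht1 : t ≤ 1)
    (hrt : r * (volume (unitBall d)).toReal < capC d * (t * Real.sqrt t ^ (d-1))) :
    prD ((volume (unitBall d))⁻¹ • volume.restrict (unitBall d))
      (DIS (ballD ((volume (unitBall d))⁻¹ • volume.restrict (unitBall d))
        {h' | IsHalfspace h'} h r)) ≤ d * t := by
  set V := volume (unitBall d) with hV
  have hV0 : 0 < V := volume_unitBall_pos hd
  have hVtop : V < ⊤ := volume_unitBall_lt_top
  set D := V⁻¹ • volume.restrict (unitBall d) with hDdef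
  have hD : ∀ A : Set (Fin d → ℝ), D A = V⁻¹ * volume (A ∩ unitBall d) := by
    intro A
    rw [hDdef, Measure.smul_apply, Measure.restrict_apply' measurableSet_unitBall, smul_eq_mul]
  have hD1 : D univ = 1 := by
    rw [hD, univ_inter, ← hV, ENNReal.inv_mul_cancel hV0.ne' hVtop.ne]
  have hDle : ∀ A, D A ≤ 1 := fun A => hD1 ▸ measure_mono (subset_univ A)
  have hprD_le_one : ∀ A, prD D A ≤ 1 := by
    intro A
    have := ENNReal.toReal_mono (by simp) (hDle A)
    simpa [prD] using this
  have hd' : (1:ℝ) ≤ d := by exact_mod_cast hd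
  rcases eq_or_lt_of_le ht1 with hteq | ht1'
  · subst hteq
    calc prD D _ ≤ 1 := hprD_le_one _
      _ ≤ (d:ℝ) * 1 := by linarith
  have hVr : 0 < V.toReal := ENNReal.toReal_pos hV0.ne' hVtop.ne
  set Ann : Set (Fin d → ℝ) :=
    {x | ∑ i, x i ^ 2 ≤ 1 ∧ 1 - t ≤ Real.sqrt (∑ i, x i ^ 2)} with hAnn
  have hsub : DIS (ballD D {h' | IsHalfspace h'} h r) ∩ unitBall d ⊆ Ann := by
    rintro x ⟨hxD, hxB⟩
    obtain ⟨h₁, hh₁, h₂, hh₂, hx1, hx2⟩ := hxD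
    obtain ⟨hHS, hpr⟩ := hh₁
    obtain ⟨a, ha, b, hab⟩ := halfspace_normalize hHS
    have hDIS : h₁ ∩ unitBall d ⊆ DIS {h, h₁} := by
      rintro z ⟨hz1, hzB⟩
      have hzh : z ∉ h := fun hzh => Set.disjoint_left.mp hdisj hzh hzB
      exact ⟨h₁, Or.inr rfl, h, Or.inl rfl, hz1, hzh⟩
    have hle : D (h₁ ∩ unitBall d) ≤ ENNReal.ofReal r := by
      refine le_trans (measure_mono hDIS) ?_
      rw [ENNReal.le_ofReal_iff_toReal_le (lt_of_le_of_lt (hDle _) ENNReal.one_lt_top).ne hr.le]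
      exact hpr
    have hvol : volume (h₁ ∩ unitBall d) ≤ ENNReal.ofReal (r * V.toReal) := by
      rw [hD, inter_assoc, inter_self] at hle
      have h5 := mul_le_mul_right hle V
      rw [← mul_assoc, ENNReal.mul_inv_cancel hV0.ne' hVtop.ne, one_mul] at h5
      calc volume (h₁ ∩ unitBall d) ≤ V * ENNReal.ofReal r := h5
        _ = ENNReal.ofReal (r * V.toReal) := by
            conv_lhs => rw [← ENNReal.ofReal_toReal hVtop.ne]
            rw [← ENNReal.ofReal_mul ENNReal.toReal_nonneg, mul_comm]
    have hb1t : 1 - t ≤ b := by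
      by_contra hc
      push_neg at hc
      have hcapsub : {x : Fin d → ℝ | ∑ i, x i ^ 2 ≤ 1 ∧ 1 - t ≤ ∑ i, a i * x i}
          ⊆ h₁ ∩ unitBall d := by
        rintro z ⟨hz1, hz2⟩
        refine ⟨?_, hz1⟩
        rw [hab]
        exact hc.le.trans hz2
      have h6 := ((cap_volume_lower hd a ha ht0 ht1).trans
        (measure_mono hcapsub)).trans hvol
      rw [ENNReal.ofReal_le_ofReal_iff (by positivity)] at h6
      linarith
    refine ⟨hxB, ?_⟩
    have hx1' : b ≤ ∑ i, a i * x i := by rw [hab] at hx1; exact hx1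
    have hCS : (∑ i, a i * x i) ≤ Real.sqrt (∑ i, x i ^ 2) := by
      have h1 : (∑ i, a i * x i) ^ 2 ≤ (∑ i, a i ^ 2) * (∑ i, x i ^ 2) :=
        Finset.sum_mul_sq_le_sq_mul_sq _ _ _
      rw [ha, one_mul] at h1
      calc ∑ i, a i * x i ≤ |∑ i, a i * x i| := le_abs_self _
        _ = Real.sqrt ((∑ i, a i * x i) ^ 2) := (Real.sqrt_sq_eq_abs _).symm
        _ ≤ Real.sqrt (∑ i, x i ^ 2) := Real.sqrt_le_sqrt h1
    linarith
  -- now bound the measure of the annulus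
  have hXle1 : ENNReal.ofReal ((1-t) ^ d) ≤ 1 :=
    ENNReal.ofReal_le_one.mpr (pow_le_one₀ (by linarith) (by linarith))
  have hXV : ENNReal.ofReal ((1-t) ^ d) * V ≤ V := by
    calc ENNReal.ofReal ((1-t) ^ d) * V ≤ 1 * V := mul_le_mul_left hXle1 V
      _ = V := one_mul V
  have hDbound : D (DIS (ballD D {h' | IsHalfspace h'} h r))
      ≤ V⁻¹ * (V - ENNReal.ofReal ((1-t) ^ d) * V) := by
    rw [hD]
    refine mul_le_mul_right ?_ _
    exact (measure_mono hsub).trans (annulus_volume_upper hd ht0 ht1')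
  have hRHSne : V⁻¹ * (V - ENNReal.ofReal ((1-t) ^ d) * V) ≠ ⊤ := by
    apply ENNReal.mul_ne_top
    · exact (ENNReal.inv_lt_top.mpr hV0).ne
    · exact (lt_of_le_of_lt tsub_le_self hVtop).ne
  have hfinal := ENNReal.toReal_mono hRHSne hDbound
  refine le_trans hfinal ?_
  rw [ENNReal.toReal_mul, ENNReal.toReal_sub_of_le hXV hVtop.ne, ENNReal.toReal_mul,
    ENNReal.toReal_ofReal (pow_nonneg (by linarith) d), ENNReal.toReal_inv]
  have hBern : 1 + (d:ℝ) * (-t) ≤ (1 + (-t)) ^ d := one_add_mul_le_pow (by linarith) d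
  have hexp : (1 - (1-t) ^ d) ≤ (d:ℝ) * t := by
    have : (1 + (-t)) ^ d = (1 - t) ^ d := by ring_nf
    rw [this] at hBern
    linarith
  calc V.toReal⁻¹ * (V.toReal - (1-t) ^ d * V.toReal)
      = 1 - (1-t) ^ d := by field_simp
    _ ≤ (d:ℝ) * t := hexp

lemma prD_le_one' (hd : 1 ≤ d) (A : Set (Fin d → ℝ)) :
    prD ((volume (unitBall d))⁻¹ • volume.restrict (unitBall d)) A ≤ 1 := by
  set V := volume (unitBall d) with hV
  have hV0 : 0 < V := volume_unitBall_pos hd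
  have hVtop : V < ⊤ := volume_unitBall_lt_top
  set D := V⁻¹ • volume.restrict (unitBall d) with hDdef
  have hD1 : D univ = 1 := by
    rw [hDdef, Measure.smul_apply, Measure.restrict_apply' measurableSet_unitBall,
      univ_inter, smul_eq_mul, ← hV, ENNReal.inv_mul_cancel hV0.ne' hVtop.ne]
  have hDle : D A ≤ 1 := hD1 ▸ measure_mono (subset_univ A)
  have := ENNReal.toReal_mono (by simp) hDle
  simpa [prD] using this

/-- For the uniform distribution on the unit ball and any halfspace `h` disjoint from
the ball, `θ_U^h(σ) = O((1/σ)^{(d−1)/(d+1)})` for all `σ > 0`, the constant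
depending only on `d`. -/
theorem stmt8 (d : ℕ) (hd : 1 ≤ d) :
    ∃ C : ℝ, 0 < C ∧
      ∀ h : Set (Fin d → ℝ), IsHalfspace h → Disjoint h (unitBall d) →
        ∀ σ : ℝ, 0 < σ →
          thetaD ((volume (unitBall d))⁻¹ • volume.restrict (unitBall d))
              {h' | IsHalfspace h'} h σ
            ≤ C * max 1 ((1 / σ) ^ (((d : ℝ) - 1) / ((d : ℝ) + 1))) := by
  have hd' : (1:ℝ) ≤ d := by exact_mod_cast hd
  set Vr := (volume (unitBall d)).toReal with hVrdef
  have hVr0 : 0 < Vr :=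
    ENNReal.toReal_pos (volume_unitBall_pos hd).ne' volume_unitBall_lt_top.ne
  have hc0 : 0 < capC d := capC_pos hd
  set q : ℝ := ((d:ℝ)+1)/2 with hqdef
  have hq0 : 0 < q := by rw [hqdef]; positivity
  set K2 : ℝ := 2*Vr/capC d with hK2def
  have hK20 : 0 < K2 := by rw [hK2def]; positivity
  set K1 : ℝ := d * K2 ^ (1/q : ℝ) with hK1def
  have hK10 : 0 < K1 := by
    rw [hK1def]
    exact mul_pos (by linarith) (Real.rpow_pos_of_pos hK20 _)
  refine ⟨1 + K1 + K2, by linarith, ?_⟩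
  intro h hHS hdisj σ hσ
  set α : ℝ := ((d:ℝ)-1)/((d:ℝ)+1) with hαdef
  have hα0 : 0 ≤ α := by
    rw [hαdef]
    apply div_nonneg <;> linarith
  set M : ℝ := max 1 ((1/σ) ^ α) with hMdef
  have hM1 : 1 ≤ M := le_max_left _ _
  set C : ℝ := 1 + K1 + K2 with hCdef
  have hC1 : 1 ≤ C := by rw [hCdef]; linarith
  have hCM1 : 1 ≤ C * M := by
    calc (1:ℝ) = 1 * 1 := (one_mul 1).symm
      _ ≤ C * M := mul_le_mul hC1 hM1 zero_le_one (by linarith)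
  simp only [thetaD]
  apply max_le hCM1
  refine Real.sSup_le ?_ (le_trans zero_le_one hCM1)
  rintro v ⟨r, hσr, rfl⟩
  have hr0 : 0 < r := hσ.trans hσr
  by_cases hu : r * K2 ≤ 1
  · -- small radius: use the cap/annulus estimate
    set t : ℝ := (r*K2) ^ (1/q : ℝ) with htdef
    have hu0 : 0 < r * K2 := mul_pos hr0 hK20
    have ht0 : 0 < t := Real.rpow_pos_of_pos hu0 _
    have ht1 : t ≤ 1 := Real.rpow_le_one hu0.le hu (by positivity)
    have hcast : ((d-1 : ℕ) : ℝ) = (d:ℝ) - 1 := by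
      rw [Nat.cast_sub hd]; simp
    have htq : t * Real.sqrt t ^ (d-1) = r * K2 := by
      rw [Real.sqrt_eq_rpow, ← Real.rpow_natCast (t ^ (1/2:ℝ)) (d-1), ← Real.rpow_mul ht0.le,
        hcast]
      nth_rewrite 1 [show t = t ^ (1:ℝ) from (Real.rpow_one t).symm]
      rw [← Real.rpow_add ht0, htdef, ← Real.rpow_mul hu0.le]
      rw [show (1/q) * (1 + 1/2 * ((d:ℝ) - 1)) = 1 by
        rw [hqdef]; field_simp; ring]
      exact Real.rpow_one _
    have hcond : r * Vr < capC d * (t * Real.sqrt t ^ (d-1)) := by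
      rw [htq, hK2def]
      have : capC d * (r * (2*Vr/capC d)) = 2*(r*Vr) := by field_simp
      rw [this]
      nlinarith
    have hkey := key_bound hd h hdisj hr0 ht0 ht1 hcond
    have hratio : prD ((volume (unitBall d))⁻¹ • volume.restrict (unitBall d))
        (DIS (ballD ((volume (unitBall d))⁻¹ • volume.restrict (unitBall d))
          {h' | IsHalfspace h'} h r)) / r ≤ (d:ℝ) * t / r := by gcongr
    refine hratio.trans ?_
    have h7 : (d:ℝ) * t / r = K1 * r ^ (1/q - 1 : ℝ) := by
      rw [htdef, Real.mul_rpow hr0.le hK20.le, Real.rpow_sub hr0, Real.rpow_one, hK1def]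
      ring
    have h8 : (1/q - 1 : ℝ) = -α := by
      rw [hqdef, hαdef]
      have : (0:ℝ) < (d:ℝ) + 1 := by linarith
      field_simp
      ring
    have h9 : r ^ (-α : ℝ) ≤ (1/σ) ^ α := by
      rw [Real.rpow_neg hr0.le, one_div, Real.inv_rpow hσ.le]
      have hσα : σ ^ α ≤ r ^ α := Real.rpow_le_rpow hσ.le hσr.le hα0
      exact inv_anti₀ (Real.rpow_pos_of_pos hσ _) hσα
    calc (d:ℝ) * t / r = K1 * r ^ (-α : ℝ) := by rw [h7, h8]
      _ ≤ K1 * ((1/σ) ^ α) := mul_le_mul_of_nonneg_left h9 hK10.le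
      _ ≤ K1 * M := mul_le_mul_of_nonneg_left (le_max_right _ _) hK10.le
      _ ≤ C * M := mul_le_mul_of_nonneg_right (by rw [hCdef]; linarith)
          (le_trans zero_le_one hM1)
  · -- large radius: trivial bound
    push_neg at hu
    have hp1 := prD_le_one' hd (DIS (ballD ((volume (unitBall d))⁻¹ •
      volume.restrict (unitBall d)) {h' | IsHalfspace h'} h r))
    have hnum : prD ((volume (unitBall d))⁻¹ • volume.restrict (unitBall d))
        (DIS (ballD ((volume (unitBall d))⁻¹ • volume.restrict (unitBall d))
          {h' | IsHalfspace h'} h r)) / r ≤ 1 / r := by gcongr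
    refine hnum.trans ?_
    have h1r : 1 / r ≤ K2 := by
      rw [div_le_iff₀ hr0]
      nlinarith
    calc 1 / r ≤ K2 := h1r
      _ = K2 * 1 := (mul_one K2).symm
      _ ≤ C * M := mul_le_mul (by rw [hCdef]; linarith) hM1 zero_le_one (by linarith)
end

section
/- Let η ≥ 4, let q be a multiple of η, let 1 ≤ k ≤ q/(4η), and set n = q+k. Let X ⊆ ℝ² consist of k 'outer' points at a common location far above the unit circle, together with q 'inner' points, q/η of which are placed at each of the η vertices of a convex polygon Ψ whose vertices lie on the upper arc of the unit circle. Then, with R the family of all halfplanes in ℝ², the disagreement coefficient of (X, R|_X) satisfies θ_X(k/n) = n/(k + q/η). -/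
open Set

/-- A halfplane in `ℝ²`: `{x | a·x ≥ b}` with `a ≠ 0`. -/
def IsHalfplane (h : Set (Fin 2 → ℝ)) : Prop :=
  ∃ a : Fin 2 → ℝ, a ≠ 0 ∧ ∃ b : ℝ, h = {x | b ≤ ∑ i, a i * x i}

/-- Empirical probability of the region `A` under the uniform distribution `U(X)` on
the point sequence `X = (ω 0, …, ω (n-1))`; this is `X̄(A)`. -/
noncomputable def empPr {α : Type*} {n : ℕ} (ω : Fin n → α) (A : Set α) : ℝ :=
  (({i : Fin n | ω i ∈ A}).ncard : ℝ) / (n : ℝ)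

/-- The `r`-ball `B_{U(X)}(h, r)` around `h`. -/
noncomputable def ballEmp {α : Type*} {n : ℕ} (ω : Fin n → α) (R : Set (Set α))
    (h : Set α) (r : ℝ) : Set (Set α) :=
  {h' | h' ∈ R ∧ empPr ω (DIS {h, h'}) ≤ r}

/-- The disagreement coefficient `θ_{U(X)}^h(σ)`. -/
noncomputable def thetaEmp {α : Type*} {n : ℕ} (ω : Fin n → α) (R : Set (Set α))
    (h : Set α) (σ : ℝ) : ℝ :=
  max 1 (sSup {v : ℝ | ∃ r : ℝ, σ < r ∧ v = empPr ω (DIS (ballEmp ω R h r)) / r})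

/-- The disagreement coefficient `θ_X(σ)` of the range space. -/
noncomputable def thetaEmpX {α : Type*} {n : ℕ} (ω : Fin n → α) (R : Set (Set α))
    (σ : ℝ) : ℝ :=
  sInf {v : ℝ | ∃ h ∈ R, empPr ω h ≤ σ ∧ v = thetaEmp ω R h σ}

set_option maxHeartbeats 1000000 in
lemma arcQC (x1 y1 x2 y2 xu yu a0 a1 b : ℝ)
    (h1 : x1^2 + y1^2 = 1) (h2 : x2^2 + y2^2 = 1) (hu : xu^2 + yu^2 = 1)
    (hy1 : 0 ≤ y1) (hy2 : 0 ≤ y2) (hyu : 0 ≤ yu)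
    (hx1 : x1 < xu) (hx2 : xu < x2) (ha : a1 ≤ 0)
    (hb1 : a0 * x1 + a1 * y1 < b) (hb2 : a0 * x2 + a1 * y2 < b) :
    a0 * xu + a1 * yu < b := by
  have hd : 0 < x2 - x1 := by linarith
  set t := (x2 - xu) / (x2 - x1) with ht
  have ht0 : 0 < t := div_pos (by linarith) hd
  have ht1 : t < 1 := (div_lt_one hd).2 (by linarith)
  have h' : t * (x2 - x1) = x2 - xu := div_mul_cancel₀ _ (ne_of_gt hd)
  have hxu : xu = t * x1 + (1 - t) * x2 := by nlinarith [h']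
  have hcs : x1 * x2 + y1 * y2 ≤ 1 := by nlinarith [sq_nonneg (x1 - x2), sq_nonneg (y1 - y2)]
  have hu' : (t * x1 + (1 - t) * x2)^2 + yu^2 = 1 := by rw [← hxu]; exact hu
  have key : yu^2 - (t * y1 + (1 - t) * y2)^2
      = 2*t*(1-t)*(1 - (x1*x2 + y1*y2)) := by
    linear_combination hu' - t^2 * h1 - (1-t)^2 * h2
  have hsq : (t * y1 + (1 - t) * y2)^2 ≤ yu^2 := by
    nlinarith [mul_nonneg (mul_nonneg ht0.le (by linarith : (0:ℝ) ≤ 1 - t)) (by linarith : (0:ℝ) ≤ 1 - (x1*x2 + y1*y2))]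
  have hyc : t * y1 + (1 - t) * y2 ≤ yu := by
    nlinarith [hsq, hyu, mul_nonneg (mul_nonneg ht0.le hy1) (mul_nonneg (by linarith : (0:ℝ) ≤ 1-t) hy2)]
  have e1 : a1 * yu ≤ a1 * (t * y1 + (1 - t) * y2) := mul_le_mul_of_nonpos_left hyc ha
  have e2 : t * (a0 * x1 + a1 * y1) < t * b := mul_lt_mul_of_pos_left hb1 ht0
  have e3 : (1 - t) * (a0 * x2 + a1 * y2) < (1 - t) * b := mul_lt_mul_of_pos_left hb2 (by linarith)
  have e4 : a0 * xu = a0 * (t * x1 + (1 - t) * x2) := by rw [← hxu]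
  nlinarith [e1, e2, e3, e4]

set_option maxHeartbeats 1000000 in
lemma forceOuter (x1 y1 x2 y2 xu yu a0 a1 b M : ℝ)
    (h1 : x1^2 + y1^2 = 1) (h2 : x2^2 + y2^2 = 1) (hu : xu^2 + yu^2 = 1)
    (hy1 : 0 ≤ y1) (hy2 : 0 ≤ y2) (hyu : 0 ≤ yu)
    (hx1 : x1 < xu) (hx2 : xu < x2)
    (hM2 : 2 ≤ M)
    (HM : x2 - x1 ≤ (xu - x1) * (x2 - xu) * (M - 1))
    (hb1 : a0 * x1 + a1 * y1 < b) (hb2 : a0 * x2 + a1 * y2 < b)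
    (hbu : b ≤ a0 * xu + a1 * yu) : b ≤ a1 * M := by
  have hy1' : y1 ≤ 1 := by nlinarith [sq_nonneg x1]
  have hy2' : y2 ≤ 1 := by nlinarith [sq_nonneg x2]
  have hyu' : yu ≤ 1 := by nlinarith [sq_nonneg xu]
  have hxu1 : -1 ≤ xu := by nlinarith [sq_nonneg yu]
  have hxu2 : xu ≤ 1 := by nlinarith [sq_nonneg yu]
  have hd1 : 0 < xu - x1 := by linarith
  have hd2 : 0 < x2 - xu := by linarith
  have ha1 : 0 < a1 := by
    by_contra hc
    push_neg at hc
    exact absurd (arcQC x1 y1 x2 y2 xu yu a0 a1 b h1 h2 hu hy1 hy2 hyu hx1 hx2 hc hb1 hb2)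
      (not_lt.2 hbu)
  have B1 : a0 * (xu - x1) + a1 > 0 := by
    nlinarith [mul_le_mul_of_nonneg_left (by linarith : y1 - yu ≥ -1) ha1.le]
  have B2 : a0 * (x2 - xu) < a1 := by
    nlinarith [mul_le_mul_of_nonneg_left (by linarith : yu - y2 ≤ 1) ha1.le]
  rcases le_or_gt 0 a0 with h0 | h0
  · have hx0 : a0 * xu ≤ a0 := by nlinarith
    have key : 0 < (a1 * (M - 1) - a0) * ((xu - x1) * (x2 - xu)) := by
      nlinarith [mul_pos hd1 hd2, mul_pos ha1 hd1, mul_pos ha1 hd2,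
        mul_lt_mul_of_pos_left B2 hd1, mul_le_mul_of_nonneg_left HM ha1.le]
    have hX : 0 < a1 * (M - 1) - a0 := by
      by_contra hX
      push_neg at hX
      nlinarith [mul_pos hd1 hd2]
    nlinarith [mul_le_mul_of_nonneg_left hyu' ha1.le]
  · have hx0 : a0 * xu ≤ -a0 := by nlinarith
    have key : 0 < (a1 * (M - 1) + a0) * ((xu - x1) * (x2 - xu)) := by
      nlinarith [mul_pos hd1 hd2, mul_pos ha1 hd1, mul_pos ha1 hd2,
        mul_lt_mul_of_pos_left B1 hd2, mul_le_mul_of_nonneg_left HM ha1.le]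
    have hX : 0 < a1 * (M - 1) + a0 := by
      by_contra hX
      push_neg at hX
      nlinarith [mul_pos hd1 hd2]
    nlinarith [mul_le_mul_of_nonneg_left hyu' ha1.le]
set_option maxHeartbeats 2000000 in
theorem stmt13 (η q k : ℕ) (hη : 4 ≤ η) (hq : η ∣ q) (hk1 : 1 ≤ k) (hk2 : 4 * η * k ≤ q)
    -- the η vertices of the convex polygon Ψ, lying on the upper arc of the unit circle
    (v : Fin η → (Fin 2 → ℝ)) (hv : Function.Injective v)
    (hvarc : ∀ j, (v j 0) ^ 2 + (v j 1) ^ 2 = 1 ∧ 0 ≤ v j 1) :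
    -- for the outer points placed at (0, M) sufficiently far above the unit circle:
    ∃ M₀ : ℝ, 1 < M₀ ∧ ∀ M : ℝ, M₀ ≤ M →
      ∀ ω : Fin (q + k) → (Fin 2 → ℝ),
        -- X consists of k outer points at (0, M) and q/η inner points
        -- at each vertex of Ψ
        {i : Fin (q + k) | ω i = ![0, M]}.ncard = k →
        (∀ j, {i : Fin (q + k) | ω i = v j}.ncard = q / η) →
        (∀ i, ω i = ![0, M] ∨ ∃ j, ω i = v j) →
        thetaEmpX ω {h | IsHalfplane h} ((k : ℝ) / ((q : ℝ) + (k : ℝ)))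
          = ((q : ℝ) + (k : ℝ)) / ((k : ℝ) + (q : ℝ) / (η : ℝ)) := by
  classical
  have hηpos : 0 < η := by omega
  obtain ⟨p, hqp⟩ := hq
  have hp4k : 4 * k ≤ p := by
    have h1 : η * (4 * k) ≤ η * p := by
      calc η * (4 * k) = 4 * η * k := by ring
      _ ≤ q := hk2
      _ = η * p := hqp
    exact Nat.le_of_mul_le_mul_left h1 hηpos
  have hpk : k < p := by omega
  have hqdiv : q / η = p := by rw [hqp]; exact Nat.mul_div_cancel_left p hηpos
  have hC : ∀ j, (v j 0)^2 + (v j 1)^2 = 1 := fun j => (hvarc j).1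
  have hY0 : ∀ j, 0 ≤ v j 1 := fun j => (hvarc j).2
  have hY1 : ∀ j, v j 1 ≤ 1 := fun j => by nlinarith [hC j, hY0 j, sq_nonneg (v j 0)]
  have hXlb : ∀ j, -1 ≤ v j 0 := fun j => by nlinarith [hC j, sq_nonneg (v j 1), sq_nonneg (v j 0 + 1)]
  have hXub : ∀ j, v j 0 ≤ 1 := fun j => by nlinarith [hC j, sq_nonneg (v j 1), sq_nonneg (v j 0 - 1)]
  have hXinj : ∀ i j : Fin η, v i 0 = v j 0 → i = j := by
    intro i j hx
    apply hv
    have hy2 : (v i 1)^2 = (v j 1)^2 := by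
      have hx2 : (v i 0)^2 = (v j 0)^2 := by rw [hx]
      linarith [hC i, hC j]
    have hy : v i 1 = v j 1 := by
      rw [← Real.sqrt_sq (hY0 i), ← Real.sqrt_sq (hY0 j), hy2]
    funext s
    fin_cases s
    · exact hx
    · exact hy
  have hFne : (Finset.univ : Finset (Fin η)).Nonempty := ⟨⟨0, hηpos⟩, Finset.mem_univ _⟩
  obtain ⟨jmin, -, hjmin⟩ := Finset.exists_min_image Finset.univ (fun j => v j 0) hFne
  obtain ⟨jmax, -, hjmax⟩ := Finset.exists_max_image Finset.univ (fun j => v j 0) hFne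
  have hjmin' : ∀ j, v jmin 0 ≤ v j 0 := fun j => hjmin j (Finset.mem_univ _)
  have hjmax' : ∀ j, v j 0 ≤ v jmax 0 := fun j => hjmax j (Finset.mem_univ _)
  have hDne : ((Finset.univ : Finset (Fin η)).offDiag).Nonempty := by
    refine ⟨(⟨0, hηpos⟩, ⟨1, by omega⟩),
      Finset.mem_offDiag.2 ⟨Finset.mem_univ _, Finset.mem_univ _, ?_⟩⟩
    simp [Fin.ext_iff]
  set δx : ℝ := ((Finset.univ : Finset (Fin η)).offDiag).inf' hDne
      (fun pr => |v pr.1 0 - v pr.2 0|) with hδxdef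
  have hδx_le : ∀ i j : Fin η, i ≠ j → δx ≤ |v i 0 - v j 0| := by
    intro i j hij
    rw [hδxdef]
    have hmem : (i, j) ∈ (Finset.univ : Finset (Fin η)).offDiag :=
      Finset.mem_offDiag.2 ⟨Finset.mem_univ _, Finset.mem_univ _, hij⟩
    exact Finset.inf'_le (fun pr => |v pr.1 0 - v pr.2 0|) hmem
  have hδx_pos : 0 < δx := by
    rw [hδxdef, Finset.lt_inf'_iff]
    rintro ⟨i, j⟩ hm
    obtain ⟨-, -, hij⟩ := Finset.mem_offDiag.1 hm
    have hne : v i 0 ≠ v j 0 := fun h => hij (hXinj i j h)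
    exact abs_pos.2 (sub_ne_zero.2 hne)
  set δd : ℝ := ((Finset.univ : Finset (Fin η)).offDiag).inf' hDne
      (fun pr => 1 - (v pr.1 0 * v pr.2 0 + v pr.1 1 * v pr.2 1)) with hδddef
  have hδd_le : ∀ i j : Fin η, i ≠ j → δd ≤ 1 - (v i 0 * v j 0 + v i 1 * v j 1) := by
    intro i j hij
    rw [hδddef]
    have hmem : (i, j) ∈ (Finset.univ : Finset (Fin η)).offDiag :=
      Finset.mem_offDiag.2 ⟨Finset.mem_univ _, Finset.mem_univ _, hij⟩
    exact Finset.inf'_le (fun pr => 1 - (v pr.1 0 * v pr.2 0 + v pr.1 1 * v pr.2 1)) hmem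
  have hδd_pos : 0 < δd := by
    rw [hδddef, Finset.lt_inf'_iff]
    rintro ⟨i, j⟩ hm
    obtain ⟨-, -, hij⟩ := Finset.mem_offDiag.1 hm
    have hne : v i 0 - v j 0 ≠ 0 := fun h => hij (hXinj i j (by linarith [sub_eq_zero.1 h]))
    nlinarith [pow_two_pos_of_ne_zero hne, sq_nonneg (v i 1 - v j 1), hC i, hC j]
  have hposx : (0:ℝ) < 4/δx := by positivity
  have hposx2 : (0:ℝ) < 4/δx^2 := by positivity
  have hposd : (0:ℝ) < 4/δd := by positivity
  refine ⟨2 + 4/δx + 4/δx^2 + 4/δd, by linarith, ?_⟩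
  intro M hM ω hO hV hcov
  rw [hqdiv] at hV
  -- basic real facts
  have hM2 : 2 ≤ M := by linarith only [hM, hposx, hposx2, hposd]
  have hM1 : 1 < M := by linarith only [hM2]
  have hM0 : 0 < M := by linarith only [hM2]
  have hA2 : 4 ≤ M * δd := by
    have h1 : 4/δd ≤ M := by linarith only [hM, hposx, hposx2]
    calc (4:ℝ) = (4/δd) * δd := by field_simp
    _ ≤ M * δd := mul_le_mul_of_nonneg_right h1 hδd_pos.le
  have hA1 : 4 ≤ (M-1) * δx^2 := by
    have h1 : 4/δx^2 ≤ M - 1 := by linarith only [hM, hposx, hposd]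
    calc (4:ℝ) = (4/δx^2) * δx^2 := by field_simp
    _ ≤ (M-1) * δx^2 := mul_le_mul_of_nonneg_right h1 (sq_nonneg δx)
  set t : ℝ := 2/M with htdef
  have ht0 : 0 < t := by rw [htdef]; positivity
  have htM : t * M = 2 := div_mul_cancel₀ 2 hM0.ne'
  have ht1 : t ≤ 1 := by rw [htdef, div_le_one hM0]; linarith only [hM2]
  have h2t : 2 * t ≤ δd := by
    have h1 : (4:ℝ)/M ≤ δd := by rw [div_le_iff₀ hM0]; linarith only [hA2]
    have h2 : 2 * t = 4/M := by rw [htdef]; ring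
    linarith only [h1, h2]
  have hk0 : (0:ℝ) < k := by exact_mod_cast hk1
  have hp0 : (0:ℝ) < p := by exact_mod_cast (by omega : 0 < p)
  have hqnn : (0:ℝ) ≤ q := Nat.cast_nonneg q
  have hn0 : (0:ℝ) < (q:ℝ) + k := by linarith only [hqnn, hk0]
  have hq_eq : (q:ℝ) = (η:ℝ) * p := by rw [hqp]; push_cast; ring
  have hη4 : (4:ℝ) ≤ η := by exact_mod_cast hη
  have h4kp : 4*(k:ℝ) ≤ p := by exact_mod_cast hp4k
  have hpkR : (k:ℝ) < p := by exact_mod_cast hpk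
  have hkp0 : (0:ℝ) < (k:ℝ) + p := by linarith only [hk0, hp0]
  have hqη : (q:ℝ)/(η:ℝ) = (p:ℝ) := by rw [hq_eq]; field_simp
  rw [hqη]
  set σ : ℝ := (k:ℝ)/((q:ℝ)+(k:ℝ)) with hσdef
  set θ : ℝ := ((q:ℝ)+(k:ℝ))/((k:ℝ)+(p:ℝ)) with hθdef
  set rstar : ℝ := ((k:ℝ)+(p:ℝ))/((q:ℝ)+(k:ℝ)) with hrstardef
  have hrstar0 : 0 < rstar := by rw [hrstardef]; exact div_pos hkp0 hn0
  have hσr : σ < rstar := by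
    rw [hσdef, hrstardef]
    exact (div_lt_div_iff_of_pos_right hn0).2 (by linarith only [hp0])
  have hσ0 : 0 < σ := by rw [hσdef]; exact div_pos hk0 hn0
  have hpq : (p:ℝ) ≤ q := by
    have h4p : 4*(p:ℝ) ≤ (η:ℝ)*p := mul_le_mul_of_nonneg_right hη4 hp0.le
    linarith only [hq_eq, h4p, hp0]
  have hθ1 : (1:ℝ) ≤ θ := by rw [hθdef, le_div_iff₀ hkp0]; linarith only [hpq]
  have hθinv : θ = 1 / rstar := by rw [hθdef, hrstardef, one_div_div]
  have hrn : rstar * ((q:ℝ)+k) = (k:ℝ)+p := by rw [hrstardef]; exact div_mul_cancel₀ _ hn0.ne'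
  -- the outer point
  have hPv : ∀ j, (![0, M] : Fin 2 → ℝ) ≠ v j := by
    intro j heq
    have h1 := congrFun heq 1
    simp only [Matrix.cons_val_one, Matrix.cons_val_zero, Matrix.head_cons] at h1
    linarith only [h1, hY1 j, hM2]
  have hdisjOV : ∀ j, Disjoint {i : Fin (q+k) | ω i = ![0,M]} {i : Fin (q+k) | ω i = v j} := by
    intro j
    rw [Set.disjoint_left]
    intro i hi1 hi2
    exact hPv j (by rw [← hi1]; exact hi2)
  have hdisjVV : ∀ j j' : Fin η, j ≠ j' →
      Disjoint {i : Fin (q+k) | ω i = v j} {i : Fin (q+k) | ω i = v j'} := by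
    intro j j' hjj
    rw [Set.disjoint_left]
    intro i hi1 hi2
    exact hjj (hv (by rw [← hi1]; exact hi2))
  -- counting lemmas
  have count_le_k : ∀ A : Set (Fin 2 → ℝ), (∀ j, v j ∉ A) →
      ({i : Fin (q+k) | ω i ∈ A}).ncard ≤ k := by
    intro A hA
    have hsub : {i : Fin (q+k) | ω i ∈ A} ⊆ {i : Fin (q+k) | ω i = ![0,M]} := by
      intro i hi
      rcases hcov i with h | ⟨j, h⟩
      · exact h
      · exact absurd (h ▸ hi) (hA j)
    calc ({i : Fin (q+k) | ω i ∈ A}).ncard ≤ _ := Set.ncard_le_ncard hsub (Set.toFinite _)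
    _ = k := hO
  have count_le_kp : ∀ (A : Set (Fin 2 → ℝ)) (j₀ : Fin η), (∀ j, v j ∈ A → j = j₀) →
      ({i : Fin (q+k) | ω i ∈ A}).ncard ≤ k + p := by
    intro A j₀ hA
    have hsub : {i : Fin (q+k) | ω i ∈ A} ⊆
        {i : Fin (q+k) | ω i = ![0,M]} ∪ {i : Fin (q+k) | ω i = v j₀} := by
      intro i hi
      rcases hcov i with h | ⟨j, h⟩
      · exact Set.mem_union_left _ h
      · exact Set.mem_union_right _ (show ω i = v j₀ by rw [h]; exact congrArg v (hA j (h ▸ hi)))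
    calc ({i : Fin (q+k) | ω i ∈ A}).ncard ≤ _ := Set.ncard_le_ncard hsub (Set.toFinite _)
    _ ≤ _ := Set.ncard_union_le _ _
    _ = k + p := by rw [hO, hV j₀]
  have count_le_2 : ∀ (A : Set (Fin 2 → ℝ)), (∀ j, v j ∈ A → j = jmin ∨ j = jmax) →
      ({i : Fin (q+k) | ω i ∈ A}).ncard ≤ k + (p + p) := by
    intro A hA
    have hsub : {i : Fin (q+k) | ω i ∈ A} ⊆
        {i : Fin (q+k) | ω i = ![0,M]} ∪
        ({i : Fin (q+k) | ω i = v jmin} ∪ {i : Fin (q+k) | ω i = v jmax}) := by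
      intro i hi
      rcases hcov i with h | ⟨j, h⟩
      · exact Set.mem_union_left _ h
      · rcases hA j (h ▸ hi) with rfl | rfl
        · exact Set.mem_union_right _ (Set.mem_union_left _ h)
        · exact Set.mem_union_right _ (Set.mem_union_right _ h)
    calc ({i : Fin (q+k) | ω i ∈ A}).ncard ≤ _ := Set.ncard_le_ncard hsub (Set.toFinite _)
    _ ≤ _ := Set.ncard_union_le _ _
    _ ≤ k + (p + p) := by
      have := Set.ncard_union_le {i : Fin (q+k) | ω i = v jmin} {i : Fin (q+k) | ω i = v jmax}
      rw [hO]
      rw [hV jmin, hV jmax] at this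
      omega
  have count_ge_p : ∀ (A : Set (Fin 2 → ℝ)) (j₀ : Fin η), v j₀ ∈ A →
      p ≤ ({i : Fin (q+k) | ω i ∈ A}).ncard := by
    intro A j₀ hA
    have hsub : {i : Fin (q+k) | ω i = v j₀} ⊆ {i : Fin (q+k) | ω i ∈ A} := by
      intro i hi
      show ω i ∈ A
      rw [hi]; exact hA
    calc p = _ := (hV j₀).symm
    _ ≤ _ := Set.ncard_le_ncard hsub (Set.toFinite _)
  have count_ge_2p : ∀ (A : Set (Fin 2 → ℝ)) (j j' : Fin η), j ≠ j' → v j ∈ A → v j' ∈ A →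
      p + p ≤ ({i : Fin (q+k) | ω i ∈ A}).ncard := by
    intro A j j' hjj hj hj'
    have hsub : {i : Fin (q+k) | ω i = v j} ∪ {i : Fin (q+k) | ω i = v j'} ⊆
        {i : Fin (q+k) | ω i ∈ A} := by
      intro i hi
      rcases hi with hi | hi
      · show ω i ∈ A; rw [hi]; exact hj
      · show ω i ∈ A; rw [hi]; exact hj'
    have hEq : ({i : Fin (q+k) | ω i = v j} ∪ {i : Fin (q+k) | ω i = v j'}).ncard = p + p := by
      rw [Set.ncard_union_eq (hdisjVV j j' hjj), hV j, hV j']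
    calc p + p = _ := hEq.symm
    _ ≤ _ := Set.ncard_le_ncard hsub (Set.toFinite _)
  have count_ge_kp : ∀ (A : Set (Fin 2 → ℝ)) (j₀ : Fin η),
      (![0,M] : Fin 2 → ℝ) ∈ A → v j₀ ∈ A →
      k + p ≤ ({i : Fin (q+k) | ω i ∈ A}).ncard := by
    intro A j₀ hP hA
    have hsub : {i : Fin (q+k) | ω i = ![0,M]} ∪ {i : Fin (q+k) | ω i = v j₀} ⊆
        {i : Fin (q+k) | ω i ∈ A} := by
      intro i hi
      rcases hi with hi | hi
      · show ω i ∈ A; rw [hi]; exact hP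
      · show ω i ∈ A; rw [hi]; exact hA
    have hEq : ({i : Fin (q+k) | ω i = ![0,M]} ∪ {i : Fin (q+k) | ω i = v j₀}).ncard = k + p := by
      rw [Set.ncard_union_eq (hdisjOV j₀), hO, hV j₀]
    calc k + p = _ := hEq.symm
    _ ≤ _ := Set.ncard_le_ncard hsub (Set.toFinite _)
  -- empPr helpers
  have emp_eq : ∀ A : Set (Fin 2 → ℝ),
      empPr ω A = (({i : Fin (q+k) | ω i ∈ A}).ncard : ℝ)/((q:ℝ)+k) := by
    intro A
    unfold empPr
    rw [Nat.cast_add]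
  have emp_le_one : ∀ A : Set (Fin 2 → ℝ), empPr ω A ≤ 1 := by
    intro A
    rw [emp_eq, div_le_one hn0]
    have h1 : ({i : Fin (q+k) | ω i ∈ A}).ncard ≤ q + k := by
      calc ({i : Fin (q+k) | ω i ∈ A}).ncard
          ≤ (Set.univ : Set (Fin (q+k))).ncard :=
            Set.ncard_le_ncard (Set.subset_univ _) (Set.toFinite _)
      _ = q + k := by rw [Set.ncard_univ]; simp
    exact_mod_cast h1
  have emp_le_rstar : ∀ A : Set (Fin 2 → ℝ),
      ({i : Fin (q+k) | ω i ∈ A}).ncard ≤ k + p → empPr ω A ≤ rstar := by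
    intro A hc
    rw [emp_eq, hrstardef]
    exact (div_le_div_iff_of_pos_right hn0).2 (by exact_mod_cast hc)
  -- membership rephrasings
  have mem_DIS : ∀ (R' : Set (Set (Fin 2 → ℝ))) (x : Fin 2 → ℝ),
      x ∈ DIS R' ↔ ∃ h₁ ∈ R', ∃ h₂ ∈ R', x ∈ h₁ ∧ x ∉ h₂ := fun _ _ => Iff.rfl
  have mem_ball : ∀ (h h' : Set (Fin 2 → ℝ)) (r : ℝ),
      h' ∈ ballEmp ω {h : Set (Fin 2 → ℝ) | IsHalfplane h} h r ↔
        (IsHalfplane h' ∧ empPr ω (DIS {h, h'}) ≤ r) := fun _ _ _ => Iff.rfl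
  have ball_cnt : ∀ (h h' : Set (Fin 2 → ℝ)) (r : ℝ), (∀ i, ω i ∉ h) →
      h' ∈ ballEmp ω {h : Set (Fin 2 → ℝ) | IsHalfplane h} h r →
      (({i : Fin (q+k) | ω i ∈ h'}).ncard : ℝ) ≤ r * ((q:ℝ)+k) := by
    intro h h' r hnot hmem
    obtain ⟨-, hle⟩ := (mem_ball h h' r).1 hmem
    rw [emp_eq, div_le_iff₀ hn0] at hle
    refine le_trans ?_ hle
    have hsub : {i : Fin (q+k) | ω i ∈ h'} ⊆ {i : Fin (q+k) | ω i ∈ DIS {h, h'}} := by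
      intro i hi
      exact ⟨h', Set.mem_insert_of_mem _ rfl, h, Set.mem_insert _ _, hi, hnot i⟩
    exact_mod_cast Set.ncard_le_ncard hsub (Set.toFinite _)
  -- specific halfplanes
  have hne01 : (![0,1] : Fin 2 → ℝ) ≠ 0 := by
    intro hc
    have h1 := congrFun hc 1
    simp only [Matrix.cons_val_one, Matrix.head_cons, Pi.zero_apply] at h1
    norm_num at h1
  set h₀ : Set (Fin 2 → ℝ) := {x | M + 1 ≤ ∑ i, (![0,1] : Fin 2 → ℝ) i * x i} with hh₀def
  have hh₀_hp : IsHalfplane h₀ := ⟨![0,1], hne01, M+1, by rw [hh₀def]⟩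
  have h₀_mem : ∀ x : Fin 2 → ℝ, x ∈ h₀ ↔ M + 1 ≤ x 1 := by
    intro x
    rw [hh₀def]
    simp [Fin.sum_univ_two]
  have h₀_notP : (![0, M] : Fin 2 → ℝ) ∉ h₀ := by
    rw [h₀_mem]
    simp only [Matrix.cons_val_one, Matrix.cons_val_zero, Matrix.head_cons]
    linarith only [hM2]
  have h₀_notv : ∀ j, v j ∉ h₀ := by
    intro j hj
    rw [h₀_mem] at hj
    linarith only [hj, hY1 j, hM2]
  set hup : Set (Fin 2 → ℝ) := {x | M ≤ ∑ i, (![0,1] : Fin 2 → ℝ) i * x i} with hhupdef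
  have hup_hp : IsHalfplane hup := ⟨![0,1], hne01, M, by rw [hhupdef]⟩
  have hup_mem : ∀ x : Fin 2 → ℝ, x ∈ hup ↔ M ≤ x 1 := by
    intro x
    rw [hhupdef]
    simp [Fin.sum_univ_two]
  have hup_memP : (![0, M] : Fin 2 → ℝ) ∈ hup := by
    rw [hup_mem]
    simp only [Matrix.cons_val_one, Matrix.head_cons]
    exact le_refl M
  have hup_notv : ∀ j, v j ∉ hup := by
    intro j hj
    rw [hup_mem] at hj
    linarith only [hj, hY1 j, hM2]
  set hplus : Fin η → Set (Fin 2 → ℝ) := fun j =>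
    {x | 1 + t * v j 1 ≤ ∑ i, (![v j 0, v j 1 + t] : Fin 2 → ℝ) i * x i} with hplusdef
  have hplus_hp : ∀ j, IsHalfplane (hplus j) := by
    intro j
    refine ⟨![v j 0, v j 1 + t], ?_, 1 + t * v j 1, by rw [hplusdef]⟩
    intro hc
    have h1 := congrFun hc 1
    simp only [Matrix.cons_val_one, Matrix.cons_val_zero, Matrix.head_cons, Pi.zero_apply] at h1
    linarith only [h1, hY0 j, ht0]
  have hplus_mem : ∀ (j : Fin η) (x : Fin 2 → ℝ),
      x ∈ hplus j ↔ 1 + t * v j 1 ≤ v j 0 * x 0 + (v j 1 + t) * x 1 := by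
    intro j x
    rw [hplusdef]
    simp [Fin.sum_univ_two]
  have hplus_memP : ∀ j, (![0, M] : Fin 2 → ℝ) ∈ hplus j := by
    intro j
    rw [hplus_mem]
    simp only [Matrix.cons_val_zero, Matrix.cons_val_one, Matrix.head_cons]
    have h1 : t * v j 1 ≤ 1 := by
      calc t * v j 1 ≤ 1 * 1 := mul_le_mul ht1 (hY1 j) (hY0 j) zero_le_one
      _ = 1 := by norm_num
    have h2 : 0 ≤ v j 1 * M := mul_nonneg (hY0 j) hM0.le
    linarith only [h1, h2, htM]
  have hplus_memv : ∀ j, v j ∈ hplus j := by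
    intro j
    rw [hplus_mem]
    linarith only [hC j]
  have hplus_notv : ∀ j j' : Fin η, j' ≠ j → v j' ∉ hplus j := by
    intro j j' hne hj
    rw [hplus_mem] at hj
    have h1 : δd ≤ 1 - (v j 0 * v j' 0 + v j 1 * v j' 1) := hδd_le j j' (Ne.symm hne)
    have h2 : t * (v j' 1 - v j 1) ≤ t * 1 :=
      mul_le_mul_of_nonneg_left (by linarith only [hY1 j', hY0 j]) ht0.le
    linarith only [hj, h1, h2, h2t, ht0]
  -- eligibility
  have elig_cnt : ∀ h : Set (Fin 2 → ℝ), empPr ω h ≤ σ →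
      ({i : Fin (q+k) | ω i ∈ h}).ncard ≤ k := by
    intro h hh
    rw [emp_eq, hσdef] at hh
    have := (div_le_div_iff_of_pos_right hn0).1 hh
    exact_mod_cast this
  have elig_novert : ∀ h : Set (Fin 2 → ℝ), empPr ω h ≤ σ → ∀ j, v j ∉ h := by
    intro h hh j hj
    have h1 := count_ge_p h j hj
    have h2 := elig_cnt h hh
    omega
  have key1 : ∀ h : Set (Fin 2 → ℝ), empPr ω h ≤ σ →
      empPr ω (DIS (ballEmp ω {h : Set (Fin 2 → ℝ) | IsHalfplane h} h rstar)) = 1 := by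
    intro h hh
    have hnov := elig_novert h hh
    have mb0 : h₀ ∈ ballEmp ω {h : Set (Fin 2 → ℝ) | IsHalfplane h} h rstar := by
      rw [mem_ball]
      refine ⟨hh₀_hp, emp_le_rstar _ (le_trans ?_ (Nat.le_add_right k p))⟩
      apply count_le_k
      intro j hj
      obtain ⟨h₁, hm₁, -, -, hin, -⟩ := (mem_DIS _ _).1 hj
      rcases Set.mem_insert_iff.1 hm₁ with rfl | hm₁
      · exact hnov j hin
      · rw [Set.mem_singleton_iff] at hm₁
        subst hm₁
        exact h₀_notv j hin
    have mbM : hup ∈ ballEmp ω {h : Set (Fin 2 → ℝ) | IsHalfplane h} h rstar := by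
      rw [mem_ball]
      refine ⟨hup_hp, emp_le_rstar _ (le_trans ?_ (Nat.le_add_right k p))⟩
      apply count_le_k
      intro j hj
      obtain ⟨h₁, hm₁, -, -, hin, -⟩ := (mem_DIS _ _).1 hj
      rcases Set.mem_insert_iff.1 hm₁ with rfl | hm₁
      · exact hnov j hin
      · rw [Set.mem_singleton_iff] at hm₁
        subst hm₁
        exact hup_notv j hin
    have mbp : ∀ j, hplus j ∈ ballEmp ω {h : Set (Fin 2 → ℝ) | IsHalfplane h} h rstar := by
      intro j
      rw [mem_ball]
      refine ⟨hplus_hp j, emp_le_rstar _ (count_le_kp _ j ?_)⟩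
      intro j' hj'
      obtain ⟨h₁, hm₁, -, -, hin, -⟩ := (mem_DIS _ _).1 hj'
      rcases Set.mem_insert_iff.1 hm₁ with rfl | hm₁
      · exact absurd hin (hnov j')
      · rw [Set.mem_singleton_iff] at hm₁
        subst hm₁
        by_contra hne
        exact hplus_notv j j' hne hin
    have huniv : {i : Fin (q+k) | ω i ∈
        DIS (ballEmp ω {h : Set (Fin 2 → ℝ) | IsHalfplane h} h rstar)} = Set.univ := by
      apply Set.eq_univ_of_forall
      intro i
      show ω i ∈ DIS (ballEmp ω {h : Set (Fin 2 → ℝ) | IsHalfplane h} h rstar)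
      rw [mem_DIS]
      rcases hcov i with hi | ⟨j, hi⟩
      · exact ⟨hup, mbM, h₀, mb0, by rw [hi]; exact hup_memP, by rw [hi]; exact h₀_notP⟩
      · exact ⟨hplus j, mbp j, h₀, mb0, by rw [hi]; exact hplus_memv j,
          by rw [hi]; exact h₀_notv j⟩
    rw [emp_eq, huniv, Set.ncard_univ]
    have hcard : Nat.card (Fin (q+k)) = q + k := by simp
    rw [hcard]
    push_cast
    exact div_self hn0.ne'
  -- h₀ is eligible
  have hnot₀ : ∀ i, ω i ∉ h₀ := by
    intro i hi
    rcases hcov i with h | ⟨j, h⟩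
    · rw [h] at hi
      exact h₀_notP hi
    · rw [h] at hi
      exact h₀_notv j hi
  have hemp₀ : empPr ω h₀ ≤ σ := by
    rw [emp_eq, hσdef]
    refine (div_le_div_iff_of_pos_right hn0).2 ?_
    exact_mod_cast count_le_k h₀ (fun j hj => h₀_notv j hj)
  -- the upper bound for h₀
  have key2 : ∀ x ∈ {vv : ℝ | ∃ r : ℝ, σ < r ∧
      vv = empPr ω (DIS (ballEmp ω {h : Set (Fin 2 → ℝ) | IsHalfplane h} h₀ r)) / r}, x ≤ θ := by
    rintro x ⟨r, hr, rfl⟩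
    have hr0 : 0 < r := lt_trans hσ0 hr
    rcases le_or_gt rstar r with hcase | hcase
    · have h1 : empPr ω (DIS (ballEmp ω {h : Set (Fin 2 → ℝ) | IsHalfplane h} h₀ r)) ≤ 1 :=
        emp_le_one _
      calc _ ≤ 1 / rstar := div_le_div₀ zero_le_one h1 hrstar0 hcase
      _ = θ := hθinv.symm
    · have hcnt : ∀ h' ∈ ballEmp ω {h : Set (Fin 2 → ℝ) | IsHalfplane h} h₀ r,
          (({i : Fin (q+k) | ω i ∈ h'}).ncard : ℝ) < (k:ℝ) + p := by
        intro h' hmem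
        have h1 := ball_cnt h₀ h' r hnot₀ hmem
        have h2 : r * ((q:ℝ)+k) < (k:ℝ)+p := by
          calc r * ((q:ℝ)+k) < rstar * ((q:ℝ)+k) := mul_lt_mul_of_pos_right hcase hn0
          _ = (k:ℝ)+p := hrn
        linarith only [h1, h2]
      rcases le_or_gt ((p:ℝ)/((q:ℝ)+k)) r with hc2 | hc2
      · -- middle regime : at most the two extreme vertices can be in DIS
        have hdis : ∀ j, v j ∈ DIS (ballEmp ω {h : Set (Fin 2 → ℝ) | IsHalfplane h} h₀ r) →
            j = jmin ∨ j = jmax := by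
          intro j hj
          by_contra hcon
          push_neg at hcon
          obtain ⟨hjm, hjM⟩ := hcon
          obtain ⟨h₁, hm₁, -, -, hin, -⟩ := (mem_DIS _ _).1 hj
          have hcnt₁ := hcnt h₁ hm₁
          have hhp₁ : IsHalfplane h₁ := ((mem_ball _ _ _).1 hm₁).1
          have hminnot : v jmin ∉ h₁ := by
            intro hmin
            have h5 := count_ge_2p h₁ jmin j (fun hcontr => hjm hcontr.symm) hmin hin
            have h6 : ((p:ℝ) + p) ≤ ({i : Fin (q+k) | ω i ∈ h₁}).ncard := by exact_mod_cast h5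
            linarith only [h6, hcnt₁, hpkR]
          have hmaxnot : v jmax ∉ h₁ := by
            intro hmax
            have h5 := count_ge_2p h₁ jmax j (fun hcontr => hjM hcontr.symm) hmax hin
            have h6 : ((p:ℝ) + p) ≤ ({i : Fin (q+k) | ω i ∈ h₁}).ncard := by exact_mod_cast h5
            linarith only [h6, hcnt₁, hpkR]
          have hx1 : v jmin 0 < v j 0 :=
            lt_of_le_of_ne (hjmin' j) (fun heq => hjm (hXinj j jmin heq.symm))
          have hx2 : v j 0 < v jmax 0 :=
            lt_of_le_of_ne (hjmax' j) (fun heq => hjM (hXinj j jmax heq))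
          obtain ⟨a, hane, b, hh₁⟩ := hhp₁
          have hin' : b ≤ a 0 * v j 0 + a 1 * v j 1 := by
            have := hin
            rw [hh₁] at this
            simpa [Fin.sum_univ_two] using this
          have hmin' : a 0 * v jmin 0 + a 1 * v jmin 1 < b := by
            have h5 : ¬ (b ≤ a 0 * v jmin 0 + a 1 * v jmin 1) := by
              intro h6
              apply hminnot
              rw [hh₁]
              show b ≤ ∑ i, a i * v jmin i
              rw [Fin.sum_univ_two]
              exact h6
            exact not_le.1 h5
          have hmax' : a 0 * v jmax 0 + a 1 * v jmax 1 < b := by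
            have h5 : ¬ (b ≤ a 0 * v jmax 0 + a 1 * v jmax 1) := by
              intro h6
              apply hmaxnot
              rw [hh₁]
              show b ≤ ∑ i, a i * v jmax i
              rw [Fin.sum_univ_two]
              exact h6
            exact not_le.1 h5
          have hd1 : δx ≤ v j 0 - v jmin 0 := by
            have h5 := hδx_le j jmin (fun hcontr => hjm hcontr)
            rwa [abs_of_pos (by linarith only [hx1])] at h5
          have hd2 : δx ≤ v jmax 0 - v j 0 := by
            have h5 := hδx_le jmax j (fun hcontr => hjM hcontr.symm)
            rwa [abs_of_pos (by linarith only [hx2])] at h5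
          have HM : v jmax 0 - v jmin 0 ≤ (v j 0 - v jmin 0) * (v jmax 0 - v j 0) * (M - 1) := by
            have h5 : δx * δx * (M-1) ≤ (v j 0 - v jmin 0) * (v jmax 0 - v j 0) * (M - 1) :=
              mul_le_mul_of_nonneg_right
                (mul_le_mul hd1 hd2 hδx_pos.le (by linarith only [hx1]))
                (by linarith only [hM1] : (0:ℝ) ≤ M - 1)
            linarith only [h5, hA1, hXub jmax, hXlb jmin]
          have hout := forceOuter (v jmin 0) (v jmin 1) (v jmax 0) (v jmax 1) (v j 0) (v j 1)
            (a 0) (a 1) b M (hC jmin) (hC jmax) (hC j) (hY0 jmin) (hY0 jmax) (hY0 j)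
            hx1 hx2 hM2 HM hmin' hmax' hin'
          have hPin : (![0,M] : Fin 2 → ℝ) ∈ h₁ := by
            rw [hh₁]
            show b ≤ ∑ i, a i * (![0,M] : Fin 2 → ℝ) i
            rw [Fin.sum_univ_two]
            simp only [Matrix.cons_val_zero, Matrix.cons_val_one, Matrix.head_cons]
            linarith only [hout]
          have h7 := count_ge_kp h₁ j hPin hin
          have h8 : ((k:ℝ) + p) ≤ ({i : Fin (q+k) | ω i ∈ h₁}).ncard := by exact_mod_cast h7
          linarith only [h8, hcnt₁]
        have hE := count_le_2 _ hdis
        have hE' : ((({i : Fin (q+k) | ω i ∈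
            DIS (ballEmp ω {h : Set (Fin 2 → ℝ) | IsHalfplane h} h₀ r)}).ncard : ℝ))
            ≤ (k:ℝ) + ((p:ℝ) + p) := by exact_mod_cast hE
        rw [emp_eq, div_div]
        rw [hθdef, div_le_div_iff₀ (mul_pos hn0 hr0) hkp0]
        have hpr : (p:ℝ) ≤ r * ((q:ℝ)+k) := by
          rw [div_le_iff₀ hn0] at hc2
          linarith only [hc2]
        calc ({i : Fin (q+k) | ω i ∈
              DIS (ballEmp ω {h : Set (Fin 2 → ℝ) | IsHalfplane h} h₀ r)}).ncard * ((k:ℝ)+p)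
            ≤ ((k:ℝ) + ((p:ℝ) + p)) * ((k:ℝ)+p) := mul_le_mul_of_nonneg_right hE' hkp0.le
        _ ≤ ((q:ℝ)+k) * p := by
            rw [hq_eq]
            have f1 : 4*(k:ℝ)*(p:ℝ) ≤ (p:ℝ)*(p:ℝ) := by
              have := mul_le_mul_of_nonneg_right h4kp hp0.le
              linarith only [this]
            have f2 : (k:ℝ)*(4*(k:ℝ)) ≤ (k:ℝ)*(p:ℝ) := mul_le_mul_of_nonneg_left h4kp hk0.le
            have f3 : 4*(p:ℝ)^2 ≤ (η:ℝ)*(p:ℝ)^2 := mul_le_mul_of_nonneg_right hη4 (sq_nonneg (p:ℝ))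
            nlinarith only [f1, f2, f3]
        _ ≤ ((q:ℝ)+k) * (r * ((q:ℝ)+k)) := mul_le_mul_of_nonneg_left hpr hn0.le
        _ = ((q:ℝ)+k) * (((q:ℝ)+k) * r) := by ring
      · -- small regime : no vertex is in DIS
        have hdis1 : ∀ j, v j ∉
            DIS (ballEmp ω {h : Set (Fin 2 → ℝ) | IsHalfplane h} h₀ r) := by
          intro j hj
          obtain ⟨h₁, hm₁, -, -, hin, -⟩ := (mem_DIS _ _).1 hj
          have h5 := ball_cnt h₀ h₁ r hnot₀ hm₁
          have h6 := count_ge_p h₁ j hin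
          have h7 : r * ((q:ℝ)+k) < p := by
            rw [lt_div_iff₀ hn0] at hc2
            linarith only [hc2]
          have h8 : (p:ℝ) ≤ ({i : Fin (q+k) | ω i ∈ h₁}).ncard := by exact_mod_cast h6
          linarith only [h5, h7, h8]
        have hE := count_le_k _ hdis1
        have hE' : ((({i : Fin (q+k) | ω i ∈
            DIS (ballEmp ω {h : Set (Fin 2 → ℝ) | IsHalfplane h} h₀ r)}).ncard : ℝ)) ≤ (k:ℝ) := by
          exact_mod_cast hE
        rw [emp_eq]
        have hstep1 : (({i : Fin (q+k) | ω i ∈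
            DIS (ballEmp ω {h : Set (Fin 2 → ℝ) | IsHalfplane h} h₀ r)}).ncard : ℝ)/((q:ℝ)+k)/r
            ≤ ((k:ℝ)/((q:ℝ)+k))/r := by
          exact div_le_div_of_nonneg_right ((div_le_div_iff_of_pos_right hn0).2 hE') hr0.le
        have hstep2 : ((k:ℝ)/((q:ℝ)+k))/r ≤ 1 := by
          rw [div_le_one hr0]
          rw [hσdef] at hr
          linarith only [hr]
        linarith only [hstep1, hstep2, hθ1]
  -- value at h₀
  have hSmem : θ ∈ {vv : ℝ | ∃ r : ℝ, σ < r ∧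
      vv = empPr ω (DIS (ballEmp ω {h : Set (Fin 2 → ℝ) | IsHalfplane h} h₀ r)) / r} :=
    ⟨rstar, hσr, by rw [key1 h₀ hemp₀, hθinv]⟩
  have theta₀ : thetaEmp ω {h : Set (Fin 2 → ℝ) | IsHalfplane h} h₀ σ = θ := by
    unfold thetaEmp
    have hss : sSup {vv : ℝ | ∃ r : ℝ, σ < r ∧
        vv = empPr ω (DIS (ballEmp ω {h : Set (Fin 2 → ℝ) | IsHalfplane h} h₀ r)) / r} = θ :=
      le_antisymm (csSup_le ⟨θ, hSmem⟩ key2) (le_csSup ⟨θ, key2⟩ hSmem)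
    rw [hss, max_eq_right hθ1]
  -- the general lower bound
  have glb : ∀ h : Set (Fin 2 → ℝ), empPr ω h ≤ σ →
      θ ≤ thetaEmp ω {h : Set (Fin 2 → ℝ) | IsHalfplane h} h σ := by
    intro h hh
    unfold thetaEmp
    have hmem : θ ∈ {vv : ℝ | ∃ r : ℝ, σ < r ∧
        vv = empPr ω (DIS (ballEmp ω {h : Set (Fin 2 → ℝ) | IsHalfplane h} h r)) / r} :=
      ⟨rstar, hσr, by rw [key1 h hh, hθinv]⟩
    have hbdd : BddAbove {vv : ℝ | ∃ r : ℝ, σ < r ∧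
        vv = empPr ω (DIS (ballEmp ω {h : Set (Fin 2 → ℝ) | IsHalfplane h} h r)) / r} := by
      refine ⟨1/σ, ?_⟩
      rintro x ⟨r, hr, rfl⟩
      exact div_le_div₀ zero_le_one (emp_le_one _) hσ0 hr.le
    exact le_trans (le_csSup hbdd hmem) (le_max_right 1 _)
  -- conclusion
  unfold thetaEmpX
  apply le_antisymm
  · refine csInf_le ⟨θ, ?_⟩ ⟨h₀, hh₀_hp, hemp₀, theta₀.symm⟩
    rintro y ⟨h, hR, hσh, rfl⟩
    exact glb h hσh
  · refine le_csInf ⟨θ, h₀, hh₀_hp, hemp₀, theta₀.symm⟩ ?_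
    rintro y ⟨h, hR, hσh, rfl⟩
    exact glb h hσh
end
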